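/- arXiv:q-alg/9707021 — 7 statements merged into one kernel-verified Lean document; each statement's English description precedes it below -/
import Mathlib

section
/- Z is finitely generated as an O-module, and Z is a finitely generated k-algebra. -/
/-- Let `k` be a field, `U` an associative unital `k`-algebra with center
`Z = Subalgebra.center k U`, and `O` a (commutative) `k`-subalgebra of `U` contained in the
center (realized abstractly as a commutative `k`-algebra `O` together with an injective
central algebra map `O → U`).  If `O` is a finitely generated `k`-algebra and `U` is a
finitely generated `O`-module, then `Z` is a finitely generated `O`-module and `Z` is a
finitely generated `k`-algebra. -/
theorem center_finite_of_finite (k U O : Type*) [Field k] [Ring U] [Algebra k U]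
    [CommRing O] [Algebra k O] [Algebra O U] [IsScalarTower k O U]
    (hinj : Function.Injective (algebraMap O U))
    (hO : Algebra.FiniteType k O) (hU : Module.Finite O U) :
    letI : Algebra O (Subalgebra.center k U) :=
      ((IsScalarTower.toAlgHom k O U).codRestrict (Subalgebra.center k U)
        (fun o => Subalgebra.mem_center_iff.mpr
          fun b => (Algebra.commutes (R := O) (A := U) o b).symm)).toRingHom.toAlgebra
    Module.Finite O (Subalgebra.center k U) ∧
      Algebra.FiniteType k (Subalgebra.center k U) := by
  letI : Algebra O (Subalgebra.center k U) :=
    ((IsScalarTower.toAlgHom k O U).codRestrict (Subalgebra.center k U)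
      (fun o => Subalgebra.mem_center_iff.mpr
        fun b => (Algebra.commutes (R := O) (A := U) o b).symm)).toRingHom.toAlgebra
  haveI : IsNoetherianRing O := Algebra.FiniteType.isNoetherianRing k O
  haveI : IsNoetherian O U := isNoetherian_of_isNoetherianRing_of_finite O U
  -- the inclusion Z → U is O-linear
  have hsmul : ∀ (o : O) (z : Subalgebra.center k U),
      ((o • z : Subalgebra.center k U) : U) = o • (z : U) := by
    intro o z
    rw [Algebra.smul_def, Algebra.smul_def]
    rfl
  let f : Subalgebra.center k U →ₗ[O] U :=
    { toFun := fun z => (z : U)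
      map_add' := fun _ _ => rfl
      map_smul' := hsmul }
  haveI hfin : Module.Finite O (Subalgebra.center k U) := by
    haveI := isNoetherian_of_injective f (by intro a b h; exact Subtype.ext h)
    infer_instance
  refine ⟨hfin, ?_⟩
  haveI : IsScalarTower k O (Subalgebra.center k U) := by
    refine IsScalarTower.of_algebraMap_eq fun c => ?_
    apply Subtype.ext
    show algebraMap k U c = algebraMap O U (algebraMap k O c)
    rw [IsScalarTower.algebraMap_apply k O U]
  exact Algebra.FiniteType.trans hO inferInstance
end

section
/- Every simple left U-module is finite-dimensional as a k-vector space. -/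
/-- (Nullstellensatz for `U`.)  Let `k` be a field, `U` a `k`-algebra,
`O` a central `k`-subalgebra of `U` (realized as a commutative `k`-algebra with an injective
central algebra map `O → U`) which is finitely generated as a `k`-algebra, and assume `U` is
a finitely generated `O`-module.  Then every simple left `U`-module is finite dimensional
over `k`. -/
theorem simple_module_finiteDimensional (k U O : Type*) [Field k] [Ring U] [Algebra k U]
    [CommRing O] [Algebra k O] [Algebra O U] [IsScalarTower k O U]
    (hinj : Function.Injective (algebraMap O U))
    (hO : Algebra.FiniteType k O) (hU : Module.Finite O U)
    (M : Type*) [AddCommGroup M] [Module k M] [Module U M] [IsScalarTower k U M]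
    [IsSimpleModule U M] :
    FiniteDimensional k M := by
  -- `M` is an `O`-module via `O → U`.
  letI : Module O M := Module.compHom M (algebraMap O U)
  haveI : IsScalarTower O U M := ⟨fun o u m => by
    change (o • u) • m = algebraMap O U o • (u • m)
    rw [Algebra.smul_def, mul_smul]⟩
  haveI : IsScalarTower k O M := ⟨fun r o m => by
    change algebraMap O U (r • o) • m = r • (algebraMap O U o • m)
    rw [Algebra.smul_def, map_mul, ← IsScalarTower.algebraMap_apply, mul_smul,
      algebraMap_smul]⟩
  -- `M` is a cyclic `U`-module, hence finite over `U`, hence finite over `O`.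
  haveI : Nontrivial M := IsSimpleModule.nontrivial U M
  obtain ⟨m0, hm0⟩ := exists_ne (0 : M)
  haveI : Module.Finite U M := ⟨⟨{m0}, by
    rcases eq_bot_or_eq_top (Submodule.span U ({m0} : Set M)) with h | h
    · exact absurd (Submodule.span_eq_bot.mp h m0 rfl) hm0
    · simpa using h⟩⟩
  haveI : Module.Finite O M := Module.Finite.trans U M
  -- The annihilator of `M` in `O`.
  set p := Module.annihilator O M with hp
  letI : Module (O ⧸ p) M := (Module.isTorsionBySet_annihilator O M).module
  haveI : IsScalarTower O (O ⧸ p) M :=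
    Module.IsTorsionBySet.isScalarTower (Module.isTorsionBySet_annihilator O M)
  haveI : IsScalarTower k (O ⧸ p) M :=
    Module.IsTorsionBySet.isScalarTower (Module.isTorsionBySet_annihilator O M)
  have hpne : p ≠ ⊤ := by
    intro h
    have h1 : (1 : O) ∈ p := h ▸ Submodule.mem_top
    have := Module.mem_annihilator.mp h1 m0
    rw [one_smul] at this
    exact hm0 this
  haveI : Nontrivial (O ⧸ p) := Ideal.Quotient.nontrivial_iff.mpr hpne
  -- `O ⧸ p` is a field.
  have hfield : IsField (O ⧸ p) := by
    refine ⟨exists_pair_ne _, mul_comm, ?_⟩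
    intro a ha
    obtain ⟨r, rfl⟩ := Ideal.Quotient.mk_surjective a
    have hr : r ∉ p := fun h => ha (Ideal.Quotient.eq_zero_iff_mem.mpr h)
    -- multiplication by `r` is a `U`-linear endomorphism of `M` (centrality of `O`)
    let f : M →ₗ[U] M :=
      { toFun := fun m => r • m
        map_add' := fun x y => smul_add r x y
        map_smul' := fun u x => by
          change r • (u • x) = u • (r • x)
          rw [← algebraMap_smul U r (u • x), ← mul_smul, Algebra.commutes, mul_smul,
            algebraMap_smul] }
    -- `f` is surjective
    have hrange : LinearMap.range f = ⊤ := by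
      rcases eq_bot_or_eq_top (LinearMap.range f) with h | h
      · exfalso
        refine hr (Module.mem_annihilator.mpr fun m => ?_)
        have hfm : f m ∈ LinearMap.range f := LinearMap.mem_range_self f m
        rw [h] at hfm
        exact (Submodule.mem_bot U).mp hfm
      · exact h
    have hsurj : ∀ m : M, ∃ n, r • n = m := fun m => LinearMap.range_eq_top.mp hrange m
    -- Nakayama
    have hle : (⊤ : Submodule O M) ≤ (Ideal.span {r}) • ⊤ := by
      intro m _
      obtain ⟨n, hn⟩ := hsurj m
      rw [← hn]
      exact Submodule.smul_mem_smul (Ideal.subset_span rfl) Submodule.mem_top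
    obtain ⟨s, hs1, hs0⟩ :=
      Submodule.exists_sub_one_mem_and_smul_eq_zero_of_fg_of_le_smul (Ideal.span {r}) ⊤
        Module.Finite.fg_top hle
    obtain ⟨a, ha'⟩ := Ideal.mem_span_singleton'.mp hs1
    have hsp : s ∈ p := Module.mem_annihilator.mpr fun m => hs0 m Submodule.mem_top
    have h1 : Ideal.Quotient.mk p s = 0 := Ideal.Quotient.eq_zero_iff_mem.mpr hsp
    have h2 := congrArg (Ideal.Quotient.mk p) ha'
    rw [map_sub, map_mul, h1, map_one, zero_sub] at h2
    exact ⟨-(Ideal.Quotient.mk p a), by rw [mul_neg, mul_comm, h2, neg_neg]⟩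
  letI : Field (O ⧸ p) := hfield.toField
  -- Zariski's lemma: `O ⧸ p` is finite over `k`.
  haveI : Algebra.FiniteType k (O ⧸ p) :=
    Algebra.FiniteType.of_surjective (Ideal.Quotient.mkₐ k p) (Ideal.Quotient.mkₐ_surjective k p)
  haveI : Module.Finite k (O ⧸ p) := finite_of_finite_type_of_isJacobsonRing k (O ⧸ p)
  haveI : Module.Finite (O ⧸ p) M := Module.Finite.of_restrictScalars_finite O (O ⧸ p) M
  exact Module.Finite.trans (O ⧸ p) M
end

section
/- Two simple left U-modules M and N are isomorphic as U-modules if and only if their annihilators in U are equal, i.e. Ann_U(M) = Ann_U(N). -/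
open Submodule

/-- Any atom of the quotient `U ⧸ I` is isomorphic to any simple `U`-module
with annihilator `I`. -/
private lemma atom_equiv_simple {U : Type*} [Ring U] {I : Ideal U}
    {L : Submodule U (U ⧸ (I : Submodule U U))} (hL : IsAtom L)
    (P : Type*) [AddCommGroup P] [Module U P] [IsSimpleModule U P]
    (hP : Module.annihilator U P = I) : Nonempty (L ≃ₗ[U] P) := by
  haveI : IsSimpleModule U L := isSimpleModule_iff_isAtom.2 hL
  obtain ⟨l, hlL, hl0⟩ := L.ne_bot_iff.1 hL.1
  obtain ⟨u, hu⟩ := Submodule.Quotient.mk_surjective (I : Submodule U U) l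
  have huI : u ∉ (I : Submodule U U) := fun h =>
    hl0 (by rw [← hu]; exact (Submodule.Quotient.mk_eq_zero _).2 h)
  obtain ⟨x, hx⟩ : ∃ x : P, u • x ≠ 0 := by
    by_contra h; push_neg at h
    exact huI (hP ▸ Module.mem_annihilator.2 h)
  have hIf : (I : Submodule U U) ≤ LinearMap.ker (LinearMap.toSpanSingleton U P x) := by
    intro a ha
    rw [LinearMap.mem_ker, LinearMap.toSpanSingleton_apply]
    exact Module.mem_annihilator.1 (show a ∈ Module.annihilator U P from hP.symm ▸ ha) x
  set ψ : L →ₗ[U] P :=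
    ((I : Submodule U U).liftQ (LinearMap.toSpanSingleton U P x) hIf).comp L.subtype with hψdef
  have hψl : ψ ⟨l, hlL⟩ = u • x := by
    rw [hψdef]
    simp only [LinearMap.comp_apply, Submodule.subtype_apply, ← hu]
    rfl
  have hψ0 : ψ ⟨l, hlL⟩ ≠ 0 := by rw [hψl]; exact hx
  have hker : LinearMap.ker ψ = ⊥ := by
    rcases eq_bot_or_eq_top (LinearMap.ker ψ) with h | h
    · exact h
    · exact absurd (LinearMap.mem_ker.1 (by rw [h]; trivial)) hψ0
  have hrange : LinearMap.range ψ = ⊤ := by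
    rcases eq_bot_or_eq_top (LinearMap.range ψ) with h | h
    · refine absurd ?_ hψ0
      have hmem : ψ ⟨l, hlL⟩ ∈ LinearMap.range ψ := LinearMap.mem_range_self _ _
      rw [h] at hmem; simpa using hmem
    · exact h
  exact ⟨LinearEquiv.ofBijective ψ ⟨LinearMap.ker_eq_bot.1 hker, LinearMap.range_eq_top.1 hrange⟩⟩

/-- Let `k` be a field, `U` a `k`-algebra, `O` a central `k`-subalgebra of
`U` (realized as a commutative `k`-algebra with an injective central algebra map `O → U`)
which is finitely generated as a `k`-algebra, and assume `U` is a finitely generated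
`O`-module.  Two simple left `U`-modules are isomorphic if and only if their annihilators in
`U` coincide. -/
theorem simple_module_iso_iff_annihilator_eq (k U O : Type*) [Field k] [Ring U] [Algebra k U]
    [CommRing O] [Algebra k O] [Algebra O U] [IsScalarTower k O U]
    (hinj : Function.Injective (algebraMap O U))
    (hO : Algebra.FiniteType k O) (hU : Module.Finite O U)
    (M N : Type*) [AddCommGroup M] [Module U M] [IsSimpleModule U M]
    [AddCommGroup N] [Module U N] [IsSimpleModule U N] :
    Nonempty (M ≃ₗ[U] N) ↔ Module.annihilator U M = Module.annihilator U N := by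
  constructor
  · rintro ⟨e⟩; exact e.annihilator_eq
  intro hann
  -- Give `M` an `O`-module structure through `U`.
  letI : Module O M := Module.compHom M (algebraMap O U)
  haveI : IsScalarTower O U M :=
    ⟨fun c u x => by rw [Algebra.smul_def, mul_smul]; rfl⟩
  haveI := IsSimpleModule.nontrivial U M
  obtain ⟨m0, hm0⟩ := exists_ne (0 : M)
  haveI : Module.Finite U M :=
    ⟨⟨{m0}, by simpa using IsSimpleModule.span_singleton_eq_top U hm0⟩⟩
  haveI : Module.Finite O M := Module.Finite.trans U M
  -- The annihilator of `M` in `O` is a maximal ideal.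
  set p := Module.annihilator O M with hp
  have hpne : p ≠ ⊤ := by
    intro h
    have h1 : (1 : O) ∈ p := h ▸ Submodule.mem_top
    have := Module.mem_annihilator.1 h1 m0
    rw [one_smul] at this
    exact hm0 this
  obtain ⟨mx, hmax, hpmx⟩ := Ideal.exists_le_maximal p hpne
  have hstable : ∀ (u : U) {y : M}, y ∈ mx • (⊤ : Submodule O M) →
      u • y ∈ mx • (⊤ : Submodule O M) := by
    intro u y hy
    refine Submodule.smul_induction_on hy (fun c hc n _ => ?_) (fun a b ha hb => ?_)
    · have heq : u • (c • n) = c • (u • n) := by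
        rw [← algebraMap_smul U c n, ← mul_smul, ← Algebra.commutes c u, mul_smul,
          algebraMap_smul]
      rw [heq]
      exact Submodule.smul_mem_smul hc trivial
    · rw [smul_add]; exact Submodule.add_mem _ ha hb
  let W : Submodule U M :=
    { carrier := ((mx • (⊤ : Submodule O M) : Submodule O M) : Set M)
      add_mem' := fun ha hb => Submodule.add_mem _ ha hb
      zero_mem' := Submodule.zero_mem _
      smul_mem' := fun u y hy => hstable u hy }
  have hmle : mx ≤ p := by
    rcases eq_bot_or_eq_top W with hW | hW
    · intro c hc
      rw [hp]
      refine Module.mem_annihilator.2 fun y => ?_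
      have hmem' : c • y ∈ mx • (⊤ : Submodule O M) := Submodule.smul_mem_smul hc trivial
      have hmem : c • y ∈ W := hmem'
      rw [hW] at hmem
      simpa using hmem
    · exfalso
      have htop : mx • (⊤ : Submodule O M) = ⊤ := by
        rw [eq_top_iff]
        intro y _
        exact (hW ▸ Submodule.mem_top : y ∈ W)
      obtain ⟨r, hr1, hr0⟩ :=
        Submodule.exists_sub_one_mem_and_smul_eq_zero_of_fg_of_le_smul mx ⊤
          Module.Finite.fg_top htop.ge
      have hrp : r ∈ p := Module.mem_annihilator.2 fun y => hr0 y trivial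
      have h1 : (1 : O) ∈ mx := by
        have := mx.sub_mem (hpmx hrp) hr1
        simpa using this
      exact hmax.ne_top ((Ideal.eq_top_iff_one mx).2 h1)
  have hmxp : mx = p := le_antisymm hmle hpmx
  haveI hpmax : p.IsMaximal := hmxp ▸ hmax
  -- The quotient `X = U ⧸ Ann M`.
  set I := Module.annihilator U M with hI
  set X := U ⧸ (I : Submodule U U) with hX
  have hI1 : (1 : U) ∉ (I : Submodule U U) := fun h => by
    have := Module.mem_annihilator.1 h m0
    rw [one_smul] at this
    exact hm0 this
  haveI : Nontrivial X := by
    refine Submodule.Quotient.nontrivial_iff.2 (fun h => ?_)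
    exact hI1 (h ▸ Submodule.mem_top)
  -- `X` is a torsion module over `O` with respect to `p`.
  have hpX : Module.IsTorsionBySet O X ↑p := by
    intro z c
    obtain ⟨u, rfl⟩ := Submodule.Quotient.mk_surjective _ z
    rw [← Submodule.Quotient.mk_smul, Submodule.Quotient.mk_eq_zero]
    have hcI : algebraMap O U c.1 ∈ I := by
      refine Module.mem_annihilator.2 fun y => ?_
      rw [algebraMap_smul]
      exact Module.mem_annihilator.1 c.2 y
    have heq : c.1 • u = u * algebraMap O U c.1 := by
      rw [Algebra.smul_def, Algebra.commutes]
    rw [heq]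
    exact (I : Submodule U U).smul_mem u hcI
  letI : Module (O ⧸ p) X := hpX.module
  haveI : IsScalarTower O (O ⧸ p) X := hpX.isScalarTower
  letI : Field (O ⧸ p) := Ideal.Quotient.field p
  haveI : Module.Finite O X := Module.Finite.of_surjective
    (((I : Submodule U U).mkQ).restrictScalars O) (Submodule.Quotient.mk_surjective _)
  haveI : Module.Finite (O ⧸ p) X := Module.Finite.of_restrictScalars_finite O (O ⧸ p) X
  haveI : IsArtinian (O ⧸ p) X := isArtinian_of_fg_of_artinian'
  -- Transfer Artinianness to the `U`-module structure on `X`.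
  haveI hart : IsArtinian U X := by
    let g : Submodule U X → Submodule (O ⧸ p) X := fun W =>
      { carrier := W
        add_mem' := fun ha hb => W.add_mem ha hb
        zero_mem' := W.zero_mem
        smul_mem' := by
          intro q z hz
          obtain ⟨c, rfl⟩ := Ideal.Quotient.mk_surjective q
          have heq : (Ideal.Quotient.mk p c) • z = (algebraMap O U c) • z := by
            rw [hpX.mk_smul, ← algebraMap_smul U c z]
          rw [heq]
          exact W.smul_mem _ hz }
    have hg : ∀ {a b : Submodule U X}, a < b → g a < g b := by
      intro a b h
      rw [lt_iff_le_not_ge] at h ⊢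
      exact ⟨fun x hx => h.1 hx, fun hba => h.2 fun x hx => hba hx⟩
    exact ⟨Subrelation.wf (fun {a b} h => hg h) (InvImage.wf g IsWellFounded.wf)⟩
  haveI : IsAtomic (Submodule U X) := isAtomic_of_orderBot_wellFounded_lt wellFounded_lt
  have htopne : (⊤ : Submodule U X) ≠ ⊥ := by
    intro h
    obtain ⟨z, hz⟩ := exists_ne (0 : X)
    exact hz ((Submodule.mem_bot U).1 (h ▸ Submodule.mem_top))
  obtain ⟨L, hL, -⟩ :=
    (IsAtomic.eq_bot_or_exists_atom_le (⊤ : Submodule U X)).resolve_left htopne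
  obtain ⟨eM⟩ := atom_equiv_simple hL M hI.symm
  obtain ⟨eN⟩ := atom_equiv_simple hL N (hann.symm.trans hI.symm)
  exact ⟨eM.symm.trans eN⟩
end

section
/- For every simple left U-module M, the intersection Ann_U(M) ∩ Z of the annihilator of M with the center Z is a maximal ideal of the commutative ring Z. -/
open Polynomial

/-- If `x * y = 1 = y * x` in an `O`-algebra `S` and `y` is integral over `O`, then the
inverse `y` of `x` can be realized (up to sign) as a polynomial in `x`. -/
lemma exists_aeval_mul_eq_one {O S : Type*} [CommRing O] [Ring S] [Algebra O S]
    {x y : S} (hxy : x * y = 1) (hyx : y * x = 1) (hy : IsIntegral O y) :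
    ∃ Q : Polynomial O, (Polynomial.aeval x Q) * x = 1 := by
  obtain ⟨P, hPmonic, hPy⟩ := hy
  -- work in the commutative subalgebra generated by `x` and `y`
  set A := Algebra.adjoin O ({x, y} : Set S) with hA
  letI : CommRing A := Algebra.adjoinCommRingOfComm O (by
    rintro a (rfl | rfl) b (rfl | rfl)
    · rfl
    · rw [hxy, hyx]
    · rw [hxy, hyx]
    · rfl)
  have hxA : x ∈ A := Algebra.subset_adjoin (by simp)
  have hyA : y ∈ A := Algebra.subset_adjoin (by simp)
  set x' : A := ⟨x, hxA⟩
  set y' : A := ⟨y, hyA⟩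
  letI : Invertible y' := ⟨x', Subtype.ext hxy, Subtype.ext hyx⟩
  have hval : ∀ q : Polynomial O, ∀ a : A, ((Polynomial.aeval a q : A) : S)
      = Polynomial.aeval (a : S) q := by
    intro q a
    exact (Polynomial.aeval_algHom_apply A.val a q).symm
  have hy' : Polynomial.aeval y' P = 0 := by
    apply Subtype.ext
    rw [hval]
    show Polynomial.aeval y P = ((0 : A) : S)
    rw [Polynomial.aeval_def, hPy]
    simp
  have hrev : Polynomial.aeval x' (P.reverse) = 0 := by
    have h0 : (⅟ y' : A) = x' := rfl
    have := (Polynomial.eval₂_reverse_eq_zero_iff (algebraMap O A) y' P).mpr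
      (by rwa [Polynomial.aeval_def] at hy')
    rw [h0] at this
    rwa [Polynomial.aeval_def]
  have hrevS : Polynomial.aeval x (P.reverse) = 0 := by
    have := congrArg (Subtype.val) hrev
    rwa [hval] at this
  -- split off the constant coefficient of `reverse P`, which is `1` by monicity
  have hsplit : X * (P.reverse).divX + C ((P.reverse).coeff 0) = P.reverse :=
    Polynomial.X_mul_divX_add _
  have hc0 : (P.reverse).coeff 0 = 1 := by
    rw [Polynomial.coeff_zero_reverse]
    exact hPmonic
  refine ⟨-(P.reverse).divX, ?_⟩
  have hkey : x * Polynomial.aeval x ((P.reverse).divX) + 1 = 0 := by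
    have := hrevS
    rw [← hsplit] at this
    rw [map_add, map_mul, Polynomial.aeval_X, hc0, Polynomial.C_1, map_one] at this
    exact this
  have hcomm : Polynomial.aeval x ((P.reverse).divX) * x
      = x * Polynomial.aeval x ((P.reverse).divX) := by
    have h1 : Polynomial.aeval x ((P.reverse).divX * X)
        = Polynomial.aeval x (X * (P.reverse).divX) := by rw [mul_comm]
    rwa [map_mul, map_mul, Polynomial.aeval_X] at h1
  rw [map_neg, neg_mul, hcomm, eq_neg_of_add_eq_zero_left hkey, neg_neg]

/-- Let `k` be a field, `U` a `k`-algebra with center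
`Z = Subalgebra.center k U`, `O` a central `k`-subalgebra of `U` (realized as a commutative
`k`-algebra with an injective central algebra map `O → U`) which is finitely generated as a
`k`-algebra, and assume `U` is a finitely generated `O`-module.  For every simple left
`U`-module `M`, the intersection `Ann_U(M) ∩ Z` (that is, the preimage of the annihilator of
`M` under the inclusion `Z → U`) is a maximal ideal of the commutative ring `Z`. -/
theorem annihilator_inter_center_isMaximal (k U O : Type*) [Field k] [Ring U] [Algebra k U]
    [CommRing O] [Algebra k O] [Algebra O U] [IsScalarTower k O U]
    (hinj : Function.Injective (algebraMap O U))
    (hO : Algebra.FiniteType k O) (hU : Module.Finite O U)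
    (M : Type*) [AddCommGroup M] [Module U M] [IsSimpleModule U M] :
    (Ideal.comap (Subalgebra.center k U).val (Module.annihilator U M)).IsMaximal := by
  haveI : Nontrivial M := IsSimpleModule.nontrivial U M
  -- `M` is an `O`-module via `O → U`, compatibly
  letI : Module O M := Module.compHom M (algebraMap O U)
  have hsmul : ∀ (o : O) (m : M), o • m = (algebraMap O U o) • m := fun _ _ => rfl
  haveI : IsScalarTower O U M := ⟨fun o u m => by
    rw [hsmul, Algebra.smul_def, mul_smul]⟩
  haveI : IsScalarTower O O M := ⟨fun o o' m => by
    rw [hsmul, hsmul, hsmul, smul_eq_mul, map_mul, mul_smul]⟩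
  haveI : SMulCommClass U O M := ⟨fun u o m => by
    rw [hsmul, hsmul, ← mul_smul, ← mul_smul, Algebra.commutes o u]⟩
  -- `M` is a finite `O`-module
  haveI : Module.Finite U M := by
    obtain ⟨m, hm⟩ := exists_ne (0 : M)
    refine ⟨⟨{m}, ?_⟩⟩
    have : Submodule.span U ({m} : Set M) ≠ ⊥ := by
      simp [Submodule.span_singleton_eq_bot, hm]
    simpa using (eq_bot_or_eq_top (Submodule.span U ({m} : Set M))).resolve_left this
  haveI : Module.Finite O M := Module.Finite.trans U M
  -- the action map
  set Φ : U →ₐ[O] Module.End O M := Algebra.lsmul O O M with hΦ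
  rw [Ideal.isMaximal_iff]
  constructor
  · intro h1
    rw [Ideal.mem_comap] at h1
    obtain ⟨m, hm⟩ := exists_ne (0 : M)
    exact hm (by simpa using Module.mem_annihilator.mp h1 m)
  · intro J x hJ hxp hxJ
    -- the action of `x` is a bijective `U`-linear endomorphism of `M`
    have hxc : ∀ u : U, u * (x : U) = (x : U) * u := fun u =>
      Subalgebra.mem_center_iff.mp x.2 u
    set F : M →ₗ[U] M :=
      { toFun := fun m => (x : U) • m
        map_add' := fun a b => smul_add _ a b
        map_smul' := fun u m => by
          simp only [RingHom.id_apply, ← mul_smul, hxc u] } with hF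
    have hF0 : F ≠ 0 := by
      intro h0
      apply hxp
      rw [Ideal.mem_comap]
      refine Module.mem_annihilator.mpr fun m => ?_
      exact DFunLike.congr_fun h0 m
    have hFbij : Function.Bijective F := LinearMap.bijective_of_ne_zero hF0
    have hunit : IsUnit (Φ (x : U)) := by
      rw [Module.End.isUnit_iff]
      exact hFbij
    set g : Module.End O M := ↑hunit.unit⁻¹ with hg
    have hfg : Φ (x : U) * g = 1 := hunit.mul_val_inv
    have hgf : g * Φ (x : U) = 1 := hunit.val_inv_mul
    have hgint : IsIntegral O g := Algebra.IsIntegral.isIntegral g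
    obtain ⟨Q, hQ⟩ := exists_aeval_mul_eq_one hfg hgf hgint
    -- transport the polynomial identity back to `U`
    set y0 : U := Polynomial.aeval (x : U) Q with hy0
    have hΦy0 : Φ y0 = Polynomial.aeval (Φ (x : U)) Q :=
      (Polynomial.aeval_algHom_apply Φ (x : U) Q).symm
    have hact : ∀ m : M, (y0 * (x : U)) • m = m := by
      intro m
      have : Φ (y0 * (x : U)) = 1 := by
        rw [map_mul, hΦy0, hQ]
      calc (y0 * (x : U)) • m = (Φ (y0 * (x : U))) m := rfl
        _ = m := by rw [this]; rfl
    -- `y0` is central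
    have hy0c : y0 ∈ Subalgebra.center k U := by
      rw [hy0, Polynomial.aeval_eq_sum_range]
      refine Subalgebra.sum_mem _ fun i _ => ?_
      rw [Algebra.smul_def]
      exact mul_mem (Subalgebra.mem_center_iff.mpr fun b =>
        (Algebra.commutes' _ b).symm) (pow_mem x.2 i)
    set y : Subalgebra.center k U := ⟨y0, hy0c⟩
    have hmem : y * x - 1 ∈ Ideal.comap (Subalgebra.center k U).val
        (Module.annihilator U M) := by
      rw [Ideal.mem_comap]
      refine Module.mem_annihilator.mpr fun m => ?_
      have h2 : (Subalgebra.center k U).val (y * x) = y0 * (x : U) := rfl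
      rw [map_sub, sub_smul, map_one, one_smul, h2, hact m, sub_self]
    have : (1 : Subalgebra.center k U) = y * x - (y * x - 1) := by rw [sub_sub_cancel]
    rw [this]
    exact Ideal.sub_mem J (Ideal.mul_mem_left J y hxJ) (hJ hmem)
end

section
/- The multiplication (a ⊗ g)(b ⊗ h) = a b σ(h₁ ⊗ g₁) ⊗ h₂ g₂ makes the vector space R ⊗ H an associative unital algebra with identity element 1 ⊗ 1 if and only if for all g, h, t ∈ H one has σ(h₁ ⊗ g₁)σ(h₂g₂ ⊗ t) = σ(g₁ ⊗ t₁)σ(h ⊗ g₂t₂) and σ(h ⊗ 1) = σ(1 ⊗ h) = ε(h)1. -/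
open TensorProduct LinearMap

noncomputable section TwistedProducts

universe u

variable (k : Type u) [Field k]

/-- The convolution product `(f ∗ g)(x) = f(x₁) g(x₂)` of two linear maps from a
`k`-coalgebra `C` to a `k`-algebra `A`. -/
def conv {C A : Type u} [AddCommGroup C] [Module k C] [Coalgebra k C]
    [Ring A] [Algebra k A] (f g : C →ₗ[k] A) : C →ₗ[k] A :=
  LinearMap.mul' k A ∘ₗ TensorProduct.map f g ∘ₗ Coalgebra.comul

/-- The unit `x ↦ ε(x)1` for the convolution product. -/
def convOne {C A : Type u} [AddCommGroup C] [Module k C] [Coalgebra k C]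
    [Ring A] [Algebra k A] : C →ₗ[k] A :=
  Algebra.linearMap k A ∘ₗ Coalgebra.counit

variable (H : Type u) [Ring H] [HopfAlgebra k H]

/-- `H` is cocommutative: `comul` is invariant under the flip of the two tensor factors. -/
def IsCocommutative : Prop :=
  (TensorProduct.comm k H H).toLinearMap ∘ₗ Coalgebra.comul = (Coalgebra.comul : H →ₗ[k] H ⊗[k] H)

variable {R : Type u} [CommRing R] [Algebra k R]

/-- The linear map `H ⊗ H ⊗ H →ₗ R`, `(h ⊗ g) ⊗ t ↦ σ(h₁ ⊗ g₁) σ(h₂g₂ ⊗ t)`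
(the left-hand side of the cocycle identity, written in Sweedler notation). -/
def cocycleLHS (σ : H ⊗[k] H →ₗ[k] R) : (H ⊗[k] H) ⊗[k] H →ₗ[k] R :=
  LinearMap.mul' k R
    ∘ₗ TensorProduct.map σ (σ ∘ₗ TensorProduct.map (LinearMap.mul' k H) LinearMap.id)
    ∘ₗ (TensorProduct.assoc k (H ⊗[k] H) (H ⊗[k] H) H).toLinearMap
    ∘ₗ TensorProduct.map Coalgebra.comul LinearMap.id

/-- The linear map `H ⊗ H ⊗ H →ₗ R`, `(h ⊗ g) ⊗ t ↦ σ(g₁ ⊗ t₁) σ(h ⊗ g₂t₂)`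
(the right-hand side of the cocycle identity, written in Sweedler notation). -/
def cocycleRHS (σ : H ⊗[k] H →ₗ[k] R) : (H ⊗[k] H) ⊗[k] H →ₗ[k] R :=
  LinearMap.mul' k R
    ∘ₗ TensorProduct.map σ σ
    ∘ₗ (TensorProduct.leftComm k H (H ⊗[k] H) H).toLinearMap
    ∘ₗ TensorProduct.map LinearMap.id (TensorProduct.map LinearMap.id (LinearMap.mul' k H))
    ∘ₗ TensorProduct.map LinearMap.id Coalgebra.comul
    ∘ₗ (TensorProduct.assoc k H H H).toLinearMap

/-- `σ : H ⊗ H → R` is a cocycle: it is convolution invertible, satisfies the cocycle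
identity `σ(h₁ ⊗ g₁)σ(h₂g₂ ⊗ t) = σ(g₁ ⊗ t₁)σ(h ⊗ g₂t₂)` and is normalized:
`σ(h ⊗ 1) = σ(1 ⊗ h) = ε(h)1`. -/
def IsCocycle (σ : H ⊗[k] H →ₗ[k] R) : Prop :=
  (∃ σ' : H ⊗[k] H →ₗ[k] R, conv k σ σ' = convOne k ∧ conv k σ' σ = convOne k) ∧
  cocycleLHS k H σ = cocycleRHS k H σ ∧
  ∀ h : H, σ (h ⊗ₜ (1 : H)) = algebraMap k R (Coalgebra.counit h) ∧
    σ ((1 : H) ⊗ₜ h) = algebraMap k R (Coalgebra.counit h)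

/-- The twisted multiplication on `R ⊗ H`:
`(a ⊗ g) ⊗ (b ⊗ h) ↦ a b σ(h₁ ⊗ g₁) ⊗ h₂ g₂` (Sweedler notation), as a linear map
`(R ⊗ H) ⊗ (R ⊗ H) →ₗ R ⊗ H`. -/
def twistedMul (σ : H ⊗[k] H →ₗ[k] R) : (R ⊗[k] H) ⊗[k] (R ⊗[k] H) →ₗ[k] R ⊗[k] H :=
  TensorProduct.map (LinearMap.mul' k R) LinearMap.id
    ∘ₗ (TensorProduct.assoc k R R H).symm.toLinearMap
    ∘ₗ TensorProduct.map (LinearMap.mul' k R)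
        (TensorProduct.map σ (LinearMap.mul' k H))
    ∘ₗ TensorProduct.map LinearMap.id Coalgebra.comul
    ∘ₗ TensorProduct.map LinearMap.id (TensorProduct.comm k H H).toLinearMap
    ∘ₗ (TensorProduct.tensorTensorTensorComm k R H R H).toLinearMap

/-- The linear endomorphism of `H ⊗ H` given in Sweedler notation by
`a ⊗ b ↦ (a₁ b S(a₂)) ⊗ a₃`. -/
def adjointTwist : H ⊗[k] H →ₗ[k] H ⊗[k] H :=
  TensorProduct.map
      (LinearMap.mul' k H ∘ₗ TensorProduct.map (LinearMap.mul' k H) LinearMap.id)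
      LinearMap.id
    ∘ₗ (TensorProduct.assoc k (H ⊗[k] H) H H).symm.toLinearMap
    ∘ₗ TensorProduct.map LinearMap.id (TensorProduct.map (HopfAlgebra.antipode k) LinearMap.id)
    ∘ₗ (TensorProduct.tensorTensorTensorComm k H H H H).toLinearMap
    ∘ₗ TensorProduct.map LinearMap.id (TensorProduct.comm k H H).toLinearMap
    ∘ₗ (TensorProduct.assoc k (H ⊗[k] H) H H).toLinearMap
    ∘ₗ TensorProduct.map (TensorProduct.map Coalgebra.comul LinearMap.id) LinearMap.id
    ∘ₗ TensorProduct.map Coalgebra.comul LinearMap.id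

/-- A linear map `α : H ⊗ H → A` is *equivariant* if `α(a ⊗ b) = α(a₁ b S(a₂) ⊗ a₃)`
for all `a, b ∈ H` (Sweedler notation). -/
def IsEquivariant {A : Type u} [AddCommGroup A] [Module k A]
    (α : H ⊗[k] H →ₗ[k] A) : Prop :=
  α ∘ₗ adjointTwist k H = α

end TwistedProducts

set_option synthInstance.maxHeartbeats 400000
set_option maxHeartbeats 2000000
noncomputable section Aux
universe u
variable (k : Type u) [Field k] (H : Type u) [Ring H] [HopfAlgebra k H]
  {R : Type u} [CommRing R] [Algebra k R] (σ : H ⊗[k] H →ₗ[k] R)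

open TensorProduct LinearMap Coalgebra

/-- `h ⊗ g ↦ σ(h₁ ⊗ g₁) ⊗ h₂g₂`. -/
def Fmap : H ⊗[k] H →ₗ[k] R ⊗[k] H :=
  TensorProduct.map σ (LinearMap.mul' k H) ∘ₗ (Coalgebra.comul (R := k) (A := H ⊗[k] H))

lemma G_apply (r : R) (v : R ⊗[k] H) :
    TensorProduct.map (LinearMap.mul' k R) LinearMap.id
      ((TensorProduct.assoc k R R H).symm (r ⊗ₜ v)) = r • v := by
  induction v using TensorProduct.induction_on with
  | zero => simp
  | tmul x y => simp [mul'_apply, TensorProduct.smul_tmul', smul_eq_mul]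
  | add v₁ v₂ h₁ h₂ => simp only [tmul_add, map_add, h₁, h₂, smul_add]

lemma twistedMul_tmul (a b : R) (g h : H) :
    twistedMul k H σ ((a ⊗ₜ g) ⊗ₜ (b ⊗ₜ h)) = (a * b) • Fmap k H σ (h ⊗ₜ g) := by
  unfold twistedMul Fmap
  simp only [coe_comp, LinearEquiv.coe_coe, Function.comp_apply,
    tensorTensorTensorComm_tmul, map_tmul, id_coe, id_eq, comm_tmul, mul'_apply]
  exact G_apply k H (a * b) _

/-- element form of comul on a tensor-product coalgebra -/
lemma comulC_tmul (x y : H) :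
    Coalgebra.comul (R := k) (x ⊗ₜ[k] y) =
      TensorProduct.tensorTensorTensorComm k H H H H
        (Coalgebra.comul (R := k) x ⊗ₜ Coalgebra.comul (R := k) y) := by
  rw [TensorProduct.comul_def]
  rfl

/-- `Δ ∘ μ = (μ ⊗ μ) ∘ Δ_{H⊗H}` in element form. -/
lemma comul_mulH (z : H ⊗[k] H) :
    Coalgebra.comul (R := k) (LinearMap.mul' k H z) =
      TensorProduct.map (LinearMap.mul' k H) (LinearMap.mul' k H)
        (Coalgebra.comul (R := k) z) := by
  induction z using TensorProduct.induction_on with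
  | zero => simp
  | tmul u v =>
      rw [mul'_apply, Bialgebra.comul_mul, comulC_tmul]
      generalize Coalgebra.comul (R := k) u = U
      generalize Coalgebra.comul (R := k) v = V
      induction U using TensorProduct.induction_on with
      | zero => simp
      | tmul u₁ u₂ =>
          induction V using TensorProduct.induction_on with
          | zero => simp
          | tmul v₁ v₂ => simp [Algebra.TensorProduct.tmul_mul_tmul, mul'_apply]
          | add V₁ V₂ h₁ h₂ => simp_all [mul_add, tmul_add]
      | add U₁ U₂ h₁ h₂ => simp_all [add_mul, add_tmul]
  | add z₁ z₂ h₁ h₂ => simp_all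

/-- `ε ∘ μ = ε_{H⊗H}` in element form -/
lemma counit_mulH (z : H ⊗[k] H) :
    Coalgebra.counit (R := k) (LinearMap.mul' k H z) = Coalgebra.counit (R := k) (A := H ⊗[k] H) z := by
  induction z using TensorProduct.induction_on with
  | zero => simp
  | tmul u v =>
      rw [mul'_apply, Bialgebra.counit_mul, TensorProduct.counit_def]
      simp [mul'_apply, mul_comm]
  | add z₁ z₂ h₁ h₂ => simp_all

/-- `r ⊗ h ↦ ε(h) • r`. -/
def Pmap : R ⊗[k] H →ₗ[k] R :=
  (TensorProduct.rid k R).toLinearMap ∘ₗ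
    TensorProduct.map LinearMap.id (Coalgebra.counit (R := k))

@[simp] lemma Pmap_tmul (r : R) (h : H) :
    Pmap k H (R := R) (r ⊗ₜ h) = Coalgebra.counit (R := k) h • r := by
  simp [Pmap]

lemma Pmap_smul (r : R) (v : R ⊗[k] H) : Pmap k H (r • v) = r * Pmap k H v := by
  induction v using TensorProduct.induction_on with
  | zero => simp
  | tmul s u => rw [TensorProduct.smul_tmul']; simp [smul_eq_mul, mul_smul_comm]
  | add v₁ v₂ h₁ h₂ => simp_all [smul_add, mul_add]

lemma Pmap_Fmap (x : H ⊗[k] H) : Pmap k H (Fmap k H σ x) = σ x := by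
  unfold Fmap
  have key : ∀ W : (H ⊗[k] H) ⊗[k] (H ⊗[k] H),
      Pmap k H (TensorProduct.map σ (LinearMap.mul' k H) W) =
        (σ ∘ₗ (TensorProduct.rid k (H ⊗[k] H)).toLinearMap)
          ((Coalgebra.counit (R := k)).lTensor (H ⊗[k] H) W) := by
    intro W
    induction W using TensorProduct.induction_on with
    | zero => simp
    | tmul y z => simp [counit_mulH, TensorProduct.smul_tmul, map_smul]
    | add W₁ W₂ h₁ h₂ => simp_all
  rw [coe_comp, Function.comp_apply, key, Coalgebra.lTensor_counit_comul]
  simp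

/-- `r ⊗ u ↦ r * σ(t ⊗ u)` -/
def PL (t : H) : R ⊗[k] H →ₗ[k] R :=
  LinearMap.mul' k R ∘ₗ TensorProduct.map LinearMap.id (σ ∘ₗ TensorProduct.mk k H H t)

/-- `r ⊗ u ↦ r * σ(u ⊗ g)` -/
def PR (g : H) : R ⊗[k] H →ₗ[k] R :=
  LinearMap.mul' k R ∘ₗ TensorProduct.map LinearMap.id (σ ∘ₗ (TensorProduct.mk k H H).flip g)

@[simp] lemma PL_tmul (t : H) (r : R) (u : H) : PL k H σ t (r ⊗ₜ u) = r * σ (t ⊗ₜ u) := by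
  simp [PL, mul'_apply, TensorProduct.mk_apply]

@[simp] lemma PR_tmul (g : H) (r : R) (u : H) : PR k H σ g (r ⊗ₜ u) = r * σ (u ⊗ₜ g) := by
  simp [PR, mul'_apply, TensorProduct.mk_apply]

lemma P_twistedMul_right (t : H) (w : R ⊗[k] H) :
    Pmap k H (twistedMul k H σ (w ⊗ₜ ((1 : R) ⊗ₜ t))) = PL k H σ t w := by
  induction w using TensorProduct.induction_on with
  | zero => simp [TensorProduct.zero_tmul]
  | tmul b u =>
      rw [twistedMul_tmul, Pmap_smul, Pmap_Fmap, PL_tmul, mul_one]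
  | add w₁ w₂ h₁ h₂ => rw [TensorProduct.add_tmul, map_add, map_add, map_add, h₁, h₂]

lemma P_twistedMul_left (g : H) (w : R ⊗[k] H) :
    Pmap k H (twistedMul k H σ (((1 : R) ⊗ₜ g) ⊗ₜ w)) = PR k H σ g w := by
  induction w using TensorProduct.induction_on with
  | zero => simp [TensorProduct.tmul_zero]
  | tmul c u =>
      rw [twistedMul_tmul, Pmap_smul, Pmap_Fmap, PR_tmul, one_mul]
  | add w₁ w₂ h₁ h₂ => rw [TensorProduct.tmul_add, map_add, map_add, map_add, h₁, h₂]

lemma PR_Fmap (g : H) (x : H ⊗[k] H) :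
    PR k H σ g (Fmap k H σ x) = cocycleLHS k H σ (x ⊗ₜ g) := by
  unfold Fmap cocycleLHS
  simp only [coe_comp, LinearEquiv.coe_coe, Function.comp_apply, map_tmul, id_coe, id_eq]
  generalize Coalgebra.comul (R := k) x = W
  induction W using TensorProduct.induction_on with
  | zero => simp [TensorProduct.zero_tmul]
  | tmul y z => simp [TensorProduct.assoc_tmul, mul'_apply]
  | add W₁ W₂ h₁ h₂ =>
      rw [map_add, map_add, h₁, h₂, TensorProduct.add_tmul, map_add, map_add, map_add]

lemma PL_Fmap (t : H) (x : H ⊗[k] H) :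
    PL k H σ t (Fmap k H σ x) =
      cocycleRHS k H σ ((TensorProduct.assoc k H H H).symm (t ⊗ₜ x)) := by
  unfold Fmap cocycleRHS
  simp only [coe_comp, LinearEquiv.coe_coe, Function.comp_apply, map_tmul, id_coe, id_eq,
    LinearEquiv.apply_symm_apply]
  generalize Coalgebra.comul (R := k) x = W
  induction W using TensorProduct.induction_on with
  | zero => simp
  | tmul y z => simp [TensorProduct.leftComm_tmul, mul'_apply]
  | add W₁ W₂ h₁ h₂ =>
      rw [map_add, map_add, h₁, h₂, map_add, TensorProduct.tmul_add, map_add, map_add, map_add]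

section Norm
variable (hN : ∀ h : H, σ (h ⊗ₜ (1 : H)) = algebraMap k R (Coalgebra.counit h) ∧
    σ ((1 : H) ⊗ₜ h) = algebraMap k R (Coalgebra.counit h))
include hN

lemma Fmap_tmul_one (h : H) : Fmap k H σ (h ⊗ₜ (1 : H)) = (1 : R) ⊗ₜ h := by
  unfold Fmap
  rw [coe_comp, Function.comp_apply, comulC_tmul, Bialgebra.comul_one,
    Algebra.TensorProduct.one_def]
  have key : ∀ W : H ⊗[k] H,
      TensorProduct.map σ (LinearMap.mul' k H)
        (TensorProduct.tensorTensorTensorComm k H H H H (W ⊗ₜ ((1:H) ⊗ₜ (1:H)))) =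
      TensorProduct.map (Algebra.linearMap k R) LinearMap.id
        ((Coalgebra.counit (R := k)).rTensor H W) := by
    intro W
    induction W using TensorProduct.induction_on with
    | zero => simp [TensorProduct.zero_tmul]
    | tmul x y => simp [mul'_apply, (hN x).1]
    | add W₁ W₂ h₁ h₂ =>
        rw [TensorProduct.add_tmul, map_add, map_add, map_add, map_add, h₁, h₂]
  rw [key, Coalgebra.rTensor_counit_comul]
  simp

lemma Fmap_one_tmul (h : H) : Fmap k H σ ((1 : H) ⊗ₜ h) = (1 : R) ⊗ₜ h := by
  unfold Fmap
  rw [coe_comp, Function.comp_apply, comulC_tmul, Bialgebra.comul_one,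
    Algebra.TensorProduct.one_def]
  have key : ∀ W : H ⊗[k] H,
      TensorProduct.map σ (LinearMap.mul' k H)
        (TensorProduct.tensorTensorTensorComm k H H H H (((1:H) ⊗ₜ (1:H)) ⊗ₜ W)) =
      TensorProduct.map (Algebra.linearMap k R) LinearMap.id
        ((Coalgebra.counit (R := k)).rTensor H W) := by
    intro W
    induction W using TensorProduct.induction_on with
    | zero => simp [TensorProduct.tmul_zero]
    | tmul x y => simp [mul'_apply, (hN x).2]
    | add W₁ W₂ h₁ h₂ =>
        rw [TensorProduct.tmul_add, map_add, map_add, map_add, map_add, h₁, h₂]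
  rw [key, Coalgebra.rTensor_counit_comul]
  simp

end Norm

lemma twistedMul_smul_left (r : R) (w z : R ⊗[k] H) :
    twistedMul k H σ ((r • w) ⊗ₜ z) = r • twistedMul k H σ (w ⊗ₜ z) := by
  induction w using TensorProduct.induction_on with
  | zero => simp [TensorProduct.zero_tmul]
  | tmul a u =>
      rw [TensorProduct.smul_tmul']
      induction z using TensorProduct.induction_on with
      | zero => simp [TensorProduct.tmul_zero]
      | tmul b v => rw [twistedMul_tmul, twistedMul_tmul, smul_eq_mul, smul_smul, mul_assoc]
      | add z₁ z₂ h₁ h₂ =>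
          rw [TensorProduct.tmul_add, TensorProduct.tmul_add, map_add, map_add, h₁, h₂, smul_add]
  | add w₁ w₂ h₁ h₂ =>
      rw [smul_add, TensorProduct.add_tmul, TensorProduct.add_tmul, map_add, map_add,
        h₁, h₂, smul_add]

lemma twistedMul_smul_right (r : R) (w z : R ⊗[k] H) :
    twistedMul k H σ (w ⊗ₜ (r • z)) = r • twistedMul k H σ (w ⊗ₜ z) := by
  induction z using TensorProduct.induction_on with
  | zero => simp [TensorProduct.tmul_zero]
  | tmul b v =>
      rw [TensorProduct.smul_tmul']
      induction w using TensorProduct.induction_on with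
      | zero => simp [TensorProduct.zero_tmul]
      | tmul a u =>
          rw [twistedMul_tmul, twistedMul_tmul, smul_eq_mul, smul_smul, mul_left_comm]
      | add w₁ w₂ h₁ h₂ =>
          rw [TensorProduct.add_tmul, TensorProduct.add_tmul, map_add, map_add, h₁, h₂, smul_add]
  | add z₁ z₂ h₁ h₂ =>
      rw [smul_add, TensorProduct.tmul_add, TensorProduct.tmul_add, map_add, map_add,
        h₁, h₂, smul_add]

/-- `z₁ ⊗ z₂ ↦ (σ ⊗ μ)(ttc(u ⊗ (μz₁ ⊗ μz₂)))`; for `u = Δt` this computes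
`Fmap (t ⊗ μ z)` from `Δ_{H⊗H} z`. -/
def innerL (u : H ⊗[k] H) : (H ⊗[k] H) ⊗[k] (H ⊗[k] H) →ₗ[k] R ⊗[k] H :=
  TensorProduct.map σ (LinearMap.mul' k H)
    ∘ₗ (TensorProduct.tensorTensorTensorComm k H H H H).toLinearMap
    ∘ₗ TensorProduct.mk k (H ⊗[k] H) (H ⊗[k] H) u
    ∘ₗ TensorProduct.map (LinearMap.mul' k H) (LinearMap.mul' k H)

def innerR (u : H ⊗[k] H) : (H ⊗[k] H) ⊗[k] (H ⊗[k] H) →ₗ[k] R ⊗[k] H :=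
  TensorProduct.map σ (LinearMap.mul' k H)
    ∘ₗ (TensorProduct.tensorTensorTensorComm k H H H H).toLinearMap
    ∘ₗ (TensorProduct.mk k (H ⊗[k] H) (H ⊗[k] H)).flip u
    ∘ₗ TensorProduct.map (LinearMap.mul' k H) (LinearMap.mul' k H)

lemma Fmap_mul_right (t : H) (z : H ⊗[k] H) :
    Fmap k H σ (t ⊗ₜ LinearMap.mul' k H z) =
      innerL k H σ (Coalgebra.comul (R := k) t) (Coalgebra.comul (R := k) z) := by
  unfold Fmap innerL
  simp only [coe_comp, LinearEquiv.coe_coe, Function.comp_apply, TensorProduct.mk_apply]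
  rw [comulC_tmul, comul_mulH]

lemma Fmap_mul_left (g : H) (z : H ⊗[k] H) :
    Fmap k H σ (LinearMap.mul' k H z ⊗ₜ g) =
      innerR k H σ (Coalgebra.comul (R := k) g) (Coalgebra.comul (R := k) z) := by
  unfold Fmap innerR
  simp only [coe_comp, LinearEquiv.coe_coe, Function.comp_apply, TensorProduct.mk_apply,
    LinearMap.flip_apply]
  rw [comulC_tmul, comul_mulH]

def Gm : R ⊗[k] (R ⊗[k] H) →ₗ[k] R ⊗[k] H :=
  TensorProduct.map (LinearMap.mul' k R) LinearMap.id
    ∘ₗ (TensorProduct.assoc k R R H).symm.toLinearMap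

@[simp] lemma Gm_apply (r : R) (v : R ⊗[k] H) : Gm k H (r ⊗ₜ v) = r • v := by
  simpa [Gm] using G_apply k H r v

def thetaR : (H ⊗[k] H) ⊗[k] ((H ⊗[k] H) ⊗[k] (H ⊗[k] H)) →ₗ[k] R ⊗[k] H :=
  TensorProduct.map (cocycleRHS k H σ ∘ₗ (TensorProduct.assoc k H H H).symm.toLinearMap)
      (LinearMap.mul' k H ∘ₗ TensorProduct.map LinearMap.id (LinearMap.mul' k H))
    ∘ₗ (TensorProduct.tensorTensorTensorComm k H H (H ⊗[k] H) (H ⊗[k] H)).toLinearMap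

def thetaL : ((H ⊗[k] H) ⊗[k] (H ⊗[k] H)) ⊗[k] (H ⊗[k] H) →ₗ[k] R ⊗[k] H :=
  TensorProduct.map (cocycleLHS k H σ)
      (LinearMap.mul' k H ∘ₗ TensorProduct.map (LinearMap.mul' k H) LinearMap.id)
    ∘ₗ (TensorProduct.tensorTensorTensorComm k (H ⊗[k] H) (H ⊗[k] H) H H).toLinearMap

lemma innerL_zero : innerL k H σ (0 : H ⊗[k] H) = 0 := by
  apply LinearMap.ext; intro w
  induction w using TensorProduct.induction_on with
  | zero => simp
  | tmul y z => simp [innerL, TensorProduct.zero_tmul]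
  | add w₁ w₂ h₁ h₂ => simp_all

lemma innerL_add (u₁ u₂ : H ⊗[k] H) :
    innerL k H σ (u₁ + u₂) = innerL k H σ u₁ + innerL k H σ u₂ := by
  apply LinearMap.ext; intro w
  simp [innerL, TensorProduct.add_tmul]

lemma innerR_zero : innerR k H σ (0 : H ⊗[k] H) = 0 := by
  apply LinearMap.ext; intro w
  induction w using TensorProduct.induction_on with
  | zero => simp
  | tmul y z => simp [innerR, TensorProduct.zero_tmul]
  | add w₁ w₂ h₁ h₂ => simp_all

lemma innerR_add (u₁ u₂ : H ⊗[k] H) :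
    innerR k H σ (u₁ + u₂) = innerR k H σ u₁ + innerR k H σ u₂ := by
  apply LinearMap.ext; intro w
  simp [innerR, TensorProduct.add_tmul]

lemma cruxL (t : H) (x : H ⊗[k] H) :
    twistedMul k H σ (Fmap k H σ x ⊗ₜ ((1 : R) ⊗ₜ t)) =
      thetaR k H σ (Coalgebra.comul (R := k) t ⊗ₜ Coalgebra.comul (R := k) x) := by
  have step1 : ∀ W : (H ⊗[k] H) ⊗[k] (H ⊗[k] H),
      twistedMul k H σ (TensorProduct.map σ (LinearMap.mul' k H) W ⊗ₜ ((1 : R) ⊗ₜ t)) =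
        (Gm k H ∘ₗ TensorProduct.map σ (innerL k H σ (Coalgebra.comul (R := k) t)))
          ((Coalgebra.comul (R := k)).lTensor (H ⊗[k] H) W) := by
    intro W
    induction W using TensorProduct.induction_on with
    | zero => simp [TensorProduct.zero_tmul]
    | tmul y z =>
        simp only [TensorProduct.map_tmul, LinearMap.lTensor_tmul, coe_comp,
          Function.comp_apply, Gm_apply]
        rw [twistedMul_tmul, mul_one, Fmap_mul_right]
    | add W₁ W₂ h₁ h₂ =>
        rw [map_add, TensorProduct.add_tmul, map_add, h₁, h₂, ← map_add, ← map_add]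
  have step3 : ∀ (u : H ⊗[k] H) (Y : (H ⊗[k] H) ⊗[k] (H ⊗[k] H)),
      (Gm k H ∘ₗ TensorProduct.map σ (innerL k H σ u))
          ((TensorProduct.assoc k (H ⊗[k] H) (H ⊗[k] H) (H ⊗[k] H))
            ((Coalgebra.comul (R := k)).rTensor (H ⊗[k] H) Y)) =
        thetaR k H σ (u ⊗ₜ Y) := by
    intro u Y
    induction u using TensorProduct.induction_on with
    | zero =>
        rw [innerL_zero, TensorProduct.map_zero_right, TensorProduct.zero_tmul, map_zero]
        simp
    | tmul u₁ u₂ =>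
        induction Y using TensorProduct.induction_on with
        | zero => simp [TensorProduct.tmul_zero]
        | tmul x₁ x₂ =>
            simp only [LinearMap.rTensor_tmul, thetaR, cocycleRHS, coe_comp,
              LinearEquiv.coe_coe, Function.comp_apply,
              TensorProduct.tensorTensorTensorComm_tmul, TensorProduct.map_tmul,
              LinearEquiv.apply_symm_apply, id_coe, id_eq]
            generalize Coalgebra.comul (R := k) x₁ = V
            induction V using TensorProduct.induction_on with
            | zero => simp [TensorProduct.zero_tmul, TensorProduct.tmul_zero]
            | tmul y₁ y₂ =>
                simp [innerL, TensorProduct.assoc_tmul, mul'_apply,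
                  TensorProduct.leftComm_tmul, TensorProduct.smul_tmul', smul_eq_mul]
            | add V₁ V₂ h₁ h₂ =>
                rw [TensorProduct.add_tmul, map_add, map_add, map_add, h₁, h₂, map_add,
                  TensorProduct.tmul_add, map_add, map_add, map_add, TensorProduct.add_tmul]
        | add Y₁ Y₂ h₁ h₂ =>
            rw [map_add, map_add, map_add, h₁, h₂, TensorProduct.tmul_add, map_add]
    | add u₁ u₂ h₁ h₂ =>
        rw [innerL_add] at *
        rw [TensorProduct.map_add_right, TensorProduct.add_tmul, map_add, ← h₁, ← h₂]
        simp [LinearMap.add_apply]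
  have h0 := step1 (Coalgebra.comul (R := k) x)
  rw [show TensorProduct.map σ (LinearMap.mul' k H) (Coalgebra.comul (R := k) x)
        = Fmap k H σ x from rfl] at h0
  rw [h0, ← Coalgebra.coassoc_apply, step3]

lemma cruxR (g : H) (x : H ⊗[k] H) :
    twistedMul k H σ (((1 : R) ⊗ₜ g) ⊗ₜ Fmap k H σ x) =
      thetaL k H σ (Coalgebra.comul (R := k) x ⊗ₜ Coalgebra.comul (R := k) g) := by
  have step1 : ∀ W : (H ⊗[k] H) ⊗[k] (H ⊗[k] H),
      twistedMul k H σ (((1 : R) ⊗ₜ g) ⊗ₜ TensorProduct.map σ (LinearMap.mul' k H) W) =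
        (Gm k H ∘ₗ TensorProduct.map σ (innerR k H σ (Coalgebra.comul (R := k) g)))
          ((Coalgebra.comul (R := k)).lTensor (H ⊗[k] H) W) := by
    intro W
    induction W using TensorProduct.induction_on with
    | zero => simp [TensorProduct.tmul_zero]
    | tmul y z =>
        simp only [TensorProduct.map_tmul, LinearMap.lTensor_tmul, coe_comp,
          Function.comp_apply, Gm_apply]
        rw [twistedMul_tmul, one_mul, Fmap_mul_left]
    | add W₁ W₂ h₁ h₂ =>
        rw [map_add, TensorProduct.tmul_add, map_add, h₁, h₂, ← map_add, ← map_add]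
  have step3 : ∀ (u : H ⊗[k] H) (Y : (H ⊗[k] H) ⊗[k] (H ⊗[k] H)),
      (Gm k H ∘ₗ TensorProduct.map σ (innerR k H σ u))
          ((TensorProduct.assoc k (H ⊗[k] H) (H ⊗[k] H) (H ⊗[k] H))
            ((Coalgebra.comul (R := k)).rTensor (H ⊗[k] H) Y)) =
        thetaL k H σ (Y ⊗ₜ u) := by
    intro u Y
    induction u using TensorProduct.induction_on with
    | zero =>
        rw [innerR_zero, TensorProduct.map_zero_right, TensorProduct.tmul_zero, map_zero]
        simp
    | tmul g₁ g₂ =>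
        induction Y using TensorProduct.induction_on with
        | zero => simp [TensorProduct.zero_tmul]
        | tmul x₁ x₂ =>
            simp only [LinearMap.rTensor_tmul, thetaL, cocycleLHS, coe_comp,
              LinearEquiv.coe_coe, Function.comp_apply,
              TensorProduct.tensorTensorTensorComm_tmul, TensorProduct.map_tmul,
              id_coe, id_eq]
            generalize Coalgebra.comul (R := k) x₁ = V
            induction V using TensorProduct.induction_on with
            | zero => simp [TensorProduct.zero_tmul, TensorProduct.tmul_zero]
            | tmul y₁ y₂ =>
                simp [innerR, TensorProduct.assoc_tmul, mul'_apply,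
                  TensorProduct.smul_tmul', smul_eq_mul]
            | add V₁ V₂ h₁ h₂ =>
                rw [TensorProduct.add_tmul, map_add, map_add, map_add, h₁, h₂,
                  TensorProduct.add_tmul, map_add, map_add, map_add, TensorProduct.add_tmul]
        | add Y₁ Y₂ h₁ h₂ =>
            rw [map_add, map_add, map_add, h₁, h₂, TensorProduct.add_tmul, map_add]
    | add u₁ u₂ h₁ h₂ =>
        rw [innerR_add] at *
        rw [TensorProduct.map_add_right, TensorProduct.tmul_add, map_add, ← h₁, ← h₂]
        simp [LinearMap.add_apply]
  have h0 := step1 (Coalgebra.comul (R := k) x)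
  rw [show TensorProduct.map σ (LinearMap.mul' k H) (Coalgebra.comul (R := k) x)
        = Fmap k H σ x from rfl] at h0
  rw [h0, ← Coalgebra.coassoc_apply, step3]

lemma theta_eq (hC : cocycleLHS k H σ = cocycleRHS k H σ) (t h g : H) :
    thetaR k H σ (Coalgebra.comul (R := k) t ⊗ₜ Coalgebra.comul (R := k) (h ⊗ₜ g)) =
      thetaL k H σ (Coalgebra.comul (R := k) (t ⊗ₜ h) ⊗ₜ Coalgebra.comul (R := k) g) := by
  rw [comulC_tmul, comulC_tmul]
  generalize Coalgebra.comul (R := k) t = U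
  generalize Coalgebra.comul (R := k) h = V
  generalize Coalgebra.comul (R := k) g = W
  induction U using TensorProduct.induction_on with
  | zero => simp [TensorProduct.zero_tmul]
  | tmul u₁ u₂ =>
      induction V using TensorProduct.induction_on with
      | zero => simp [TensorProduct.zero_tmul, TensorProduct.tmul_zero]
      | tmul v₁ v₂ =>
          induction W using TensorProduct.induction_on with
          | zero => simp [TensorProduct.zero_tmul, TensorProduct.tmul_zero]
          | tmul w₁ w₂ =>
              simp only [thetaR, thetaL, coe_comp, LinearEquiv.coe_coe, Function.comp_apply,
                TensorProduct.tensorTensorTensorComm_tmul, TensorProduct.map_tmul,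
                TensorProduct.assoc_symm_tmul, mul'_apply, id_coe, id_eq, hC, mul_assoc]
          | add W₁ W₂ h₁ h₂ =>
              rw [TensorProduct.tmul_add, map_add, TensorProduct.tmul_add, map_add, h₁, h₂,
                TensorProduct.tmul_add, map_add]
      | add V₁ V₂ h₁ h₂ =>
          rw [TensorProduct.add_tmul, map_add, TensorProduct.tmul_add, map_add, h₁, h₂,
            TensorProduct.tmul_add, map_add, TensorProduct.add_tmul, map_add]
  | add U₁ U₂ h₁ h₂ =>
      rw [TensorProduct.add_tmul, map_add, h₁, h₂, TensorProduct.add_tmul, map_add,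
        TensorProduct.add_tmul, map_add]

end Aux

/-- Let `H` be a Hopf algebra over a field `k`, `R` a commutative
`k`-algebra and `σ : H ⊗ H → R` a linear map.  The multiplication
`(a ⊗ g)(b ⊗ h) = a b σ(h₁ ⊗ g₁) ⊗ h₂g₂` makes `R ⊗ H` an associative unital algebra with
identity `1 ⊗ 1` if and only if, for all `g, h, t ∈ H`,
`σ(h₁ ⊗ g₁)σ(h₂g₂ ⊗ t) = σ(g₁ ⊗ t₁)σ(h ⊗ g₂t₂)` and `σ(h ⊗ 1) = σ(1 ⊗ h) = ε(h)1`. -/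
theorem twistedMul_assoc_one_iff_cocycle_conditions
    (k : Type u) [Field k] (H : Type u) [Ring H] [HopfAlgebra k H]
    (R : Type u) [CommRing R] [Algebra k R] (σ : H ⊗[k] H →ₗ[k] R) :
    ((∀ x y z : R ⊗[k] H,
        twistedMul k H σ (twistedMul k H σ (x ⊗ₜ y) ⊗ₜ z) =
          twistedMul k H σ (x ⊗ₜ twistedMul k H σ (y ⊗ₜ z))) ∧
      (∀ x : R ⊗[k] H,
        twistedMul k H σ (((1 : R) ⊗ₜ (1 : H)) ⊗ₜ x) = x ∧
          twistedMul k H σ (x ⊗ₜ ((1 : R) ⊗ₜ (1 : H))) = x)) ↔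
    (cocycleLHS k H σ = cocycleRHS k H σ ∧
      ∀ h : H, σ (h ⊗ₜ (1 : H)) = algebraMap k R (Coalgebra.counit h) ∧
        σ ((1 : H) ⊗ₜ h) = algebraMap k R (Coalgebra.counit h)) := by
  have eF : ∀ (p q : H), twistedMul k H σ (((1:R) ⊗ₜ p) ⊗ₜ ((1:R) ⊗ₜ q))
      = Fmap k H σ (q ⊗ₜ p) := by
    intro p q; rw [twistedMul_tmul, mul_one, one_smul]
  constructor
  · rintro ⟨hA, hU⟩
    constructor
    · apply TensorProduct.ext'
      intro y g
      induction y using TensorProduct.induction_on with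
      | zero => simp [TensorProduct.zero_tmul]
      | tmul t h =>
          calc cocycleLHS k H σ ((t ⊗ₜ h) ⊗ₜ g)
              = PR k H σ g (Fmap k H σ (t ⊗ₜ h)) := (PR_Fmap k H σ g _).symm
            _ = PR k H σ g (twistedMul k H σ (((1:R) ⊗ₜ h) ⊗ₜ ((1:R) ⊗ₜ t))) := by rw [eF]
            _ = Pmap k H (twistedMul k H σ (((1:R) ⊗ₜ g) ⊗ₜ
                  twistedMul k H σ (((1:R) ⊗ₜ h) ⊗ₜ ((1:R) ⊗ₜ t)))) :=
                (P_twistedMul_left k H σ g _).symm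
            _ = Pmap k H (twistedMul k H σ (twistedMul k H σ (((1:R) ⊗ₜ g) ⊗ₜ ((1:R) ⊗ₜ h))
                  ⊗ₜ ((1:R) ⊗ₜ t))) := by rw [hA]
            _ = PL k H σ t (twistedMul k H σ (((1:R) ⊗ₜ g) ⊗ₜ ((1:R) ⊗ₜ h))) :=
                P_twistedMul_right k H σ t _
            _ = PL k H σ t (Fmap k H σ (h ⊗ₜ g)) := by rw [eF]
            _ = cocycleRHS k H σ ((TensorProduct.assoc k H H H).symm (t ⊗ₜ (h ⊗ₜ g))) :=
                PL_Fmap k H σ t _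
            _ = cocycleRHS k H σ ((t ⊗ₜ h) ⊗ₜ g) := by rw [TensorProduct.assoc_symm_tmul]
      | add y₁ y₂ h₁ h₂ => rw [TensorProduct.add_tmul, map_add, map_add, h₁, h₂]
    · intro h
      have h1 := (hU ((1:R) ⊗ₜ h)).1
      have h2 := (hU ((1:R) ⊗ₜ h)).2
      rw [twistedMul_tmul, mul_one, one_smul] at h1
      rw [twistedMul_tmul, one_mul, one_smul] at h2
      constructor
      · have := congrArg (Pmap k H) h1
        rw [Pmap_Fmap, Pmap_tmul] at this
        rw [this, Algebra.algebraMap_eq_smul_one]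
      · have := congrArg (Pmap k H) h2
        rw [Pmap_Fmap, Pmap_tmul] at this
        rw [this, Algebra.algebraMap_eq_smul_one]
  · rintro ⟨hC, hN⟩
    have hag : ∀ (a : R) (g : H), (a ⊗ₜ g : R ⊗[k] H) = a • ((1:R) ⊗ₜ g) := by
      intro a g; rw [TensorProduct.smul_tmul', smul_eq_mul, mul_one]
    constructor
    · intro x y z
      induction x using TensorProduct.induction_on with
      | zero => simp [TensorProduct.zero_tmul]
      | tmul a g =>
          induction y using TensorProduct.induction_on with
          | zero => simp [TensorProduct.zero_tmul, TensorProduct.tmul_zero]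
          | tmul b h =>
              induction z using TensorProduct.induction_on with
              | zero => simp [TensorProduct.tmul_zero]
              | tmul c t =>
                  rw [twistedMul_tmul k H σ a b, twistedMul_tmul k H σ b c,
                    twistedMul_smul_left, twistedMul_smul_right, hag c t,
                    twistedMul_smul_right, hag a g, twistedMul_smul_left,
                    cruxL, cruxR, theta_eq k H σ hC,
                    smul_smul, smul_smul]
                  rw [show a * b * c = b * c * a by ring]
              | add z₁ z₂ h₁ h₂ =>
                  rw [TensorProduct.tmul_add, map_add, TensorProduct.tmul_add, map_add,
                    TensorProduct.tmul_add, map_add, h₁, h₂]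
          | add y₁ y₂ h₁ h₂ =>
              rw [TensorProduct.tmul_add, map_add, TensorProduct.add_tmul, map_add,
                TensorProduct.add_tmul, map_add, TensorProduct.tmul_add, map_add, h₁, h₂]
      | add x₁ x₂ h₁ h₂ =>
          rw [TensorProduct.add_tmul, map_add, TensorProduct.add_tmul, map_add,
            TensorProduct.add_tmul, map_add, h₁, h₂]
    · intro x
      induction x using TensorProduct.induction_on with
      | zero => simp [TensorProduct.zero_tmul, TensorProduct.tmul_zero]
      | tmul a h =>
          constructor
          · rw [twistedMul_tmul, one_mul, Fmap_tmul_one k H σ hN, hag a h]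
          · rw [twistedMul_tmul, mul_one, Fmap_one_tmul k H σ hN, hag a h]
      | add x₁ x₂ h₁ h₂ =>
          constructor
          · rw [TensorProduct.tmul_add, map_add, h₁.1, h₂.1]
          · rw [TensorProduct.add_tmul, map_add, h₁.2, h₂.2]
end

section
/- Suppose the linear map σ : H ⊗ H → U defined by σ(h ⊗ g) = γ(h₁) γ(g₁) γ⁻¹(h₂g₂) takes all its values in the center of U. Then γ is equivariant, meaning γ(h₁ g S(h₂)) = γ(h₁) γ(g) γ⁻¹(h₂) for all h, g ∈ H, if and only if σ(a ⊗ b) = σ(a₁ b S(a₂) ⊗ a₃) for all a, b ∈ H. -/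
open TensorProduct LinearMap

noncomputable section AuxMachinery
open TensorProduct LinearMap Coalgebra
universe u2
variable {k : Type u} [Field k]
variable {C A : Type u} [AddCommGroup C] [Module k C] [Coalgebra k C]
    [Ring A] [Algebra k A]

theorem conv_apply (f g : C →ₗ[k] A) (x : C) :
    conv (k := k) f g x = LinearMap.mul' k A (TensorProduct.map f g (comul x)) := rfl

theorem conv_repr (f g : C →ₗ[k] A) {x : C} {ι : Type*} (r : Coalgebra.Repr k x ι) :
    conv (k := k) f g x = ∑ i ∈ r.index, f (r.left i) * g (r.right i) := by
  rw [conv_apply, ← r.eq]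
  simp [map_sum]

theorem conv_assoc (f g h : C →ₗ[k] A) :
    conv (k := k) (conv (k := k) f g) h = conv (k := k) f (conv (k := k) g h) := by
  ext x
  have r := ℛ k x
  have r1 : ∀ i, Coalgebra.Repr k (r.left i) (C × C) := fun i => ℛ k (r.left i)
  have r2 : ∀ i, Coalgebra.Repr k (r.right i) (C × C) := fun i => ℛ k (r.right i)
  have key := Coalgebra.sum_map_tmul_tmul_eq (R := k) f g h x (repr := r) (a₁ := r1) (a₂ := r2)
  have key2 := congrArg (LinearMap.mul' k A ∘ₗ lTensor A (LinearMap.mul' k A)) key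
  simp only [map_sum, coe_comp, Function.comp_apply, lTensor_tmul, mul'_apply] at key2
  rw [conv_repr _ _ r, conv_repr _ _ r]
  calc ∑ i ∈ r.index, conv (k := k) f g (r.left i) * h (r.right i)
      = ∑ i ∈ r.index, ∑ j ∈ (r1 i).index,
          f ((r1 i).left j) * ((g ((r1 i).right j)) * h (r.right i)) := by
        refine Finset.sum_congr rfl fun i _ => ?_
        rw [conv_repr _ _ (r1 i), Finset.sum_mul]
        simp [mul_assoc]
    _ = ∑ i ∈ r.index, ∑ j ∈ (r2 i).index,
          f (r.left i) * (g ((r2 i).left j) * h ((r2 i).right j)) := key2.symm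
    _ = ∑ i ∈ r.index, f (r.left i) * conv (k := k) g h (r.right i) := by
        refine Finset.sum_congr rfl fun i _ => ?_
        rw [conv_repr _ _ (r2 i), Finset.mul_sum]

theorem convOne_apply (x : C) :
    convOne (k := k) (A := A) x = algebraMap k A (counit x) := rfl

theorem conv_one_right (f : C →ₗ[k] A) : conv (k := k) f (convOne (k := k)) = f := by
  ext x
  have r := ℛ k x
  rw [conv_repr _ _ r]
  have key := Coalgebra.sum_tmul_counit_eq (R := k) r
  have key2 := congrArg ((TensorProduct.rid k A).toLinearMap ∘ₗ
    TensorProduct.map f LinearMap.id) key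
  simp only [map_sum, coe_comp, LinearEquiv.coe_coe, Function.comp_apply, map_tmul,
    rid_tmul, id_coe, id_eq, one_smul] at key2
  calc ∑ i ∈ r.index, f (r.left i) * convOne (k := k) (A := A) (r.right i)
      = ∑ i ∈ r.index, counit (R := k) (r.right i) • f (r.left i) := by
        refine Finset.sum_congr rfl fun i _ => ?_
        rw [_root_.convOne_apply, Algebra.smul_def, Algebra.commutes]
    _ = f x := key2

theorem conv_one_left (f : C →ₗ[k] A) : conv (k := k) (convOne (k := k)) f = f := by
  ext x
  have r := ℛ k x
  rw [conv_repr _ _ r]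
  have key := Coalgebra.sum_counit_tmul_eq (R := k) r
  have key2 := congrArg ((TensorProduct.lid k A).toLinearMap ∘ₗ
    TensorProduct.map LinearMap.id f) key
  simp only [map_sum, coe_comp, LinearEquiv.coe_coe, Function.comp_apply, map_tmul,
    lid_tmul, id_coe, id_eq, one_smul] at key2
  calc ∑ i ∈ r.index, convOne (k := k) (A := A) (r.left i) * f (r.right i)
      = ∑ i ∈ r.index, counit (R := k) (r.left i) • f (r.right i) := by
        refine Finset.sum_congr rfl fun i _ => ?_
        rw [_root_.convOne_apply, Algebra.smul_def]
    _ = f x := key2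


-- generic conv lemmas (to append inside machinery section, before H-specific part)
theorem conv_comp {D : Type u} [AddCommGroup D] [Module k D] [Coalgebra k D]
    (f : C →ₗc[k] D) (α β : D →ₗ[k] A) :
    conv k (α ∘ₗ f.toLinearMap) (β ∘ₗ f.toLinearMap) = conv k α β ∘ₗ f.toLinearMap := by
  unfold conv
  rw [TensorProduct.map_comp, comp_assoc, comp_assoc, f.map_comp_comul]
  rfl

theorem convOne_comp {D : Type u} [AddCommGroup D] [Module k D] [Coalgebra k D]
    (f : C →ₗc[k] D) :
    (convOne k : D →ₗ[k] A) ∘ₗ f.toLinearMap = convOne k := by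
  unfold _root_.convOne
  rw [comp_assoc, f.counit_comp]

theorem conv_cancel_right (x y u u' : C →ₗ[k] A) (h : conv k x u = conv k y u)
    (huu' : conv k u u' = convOne k) : x = y := by
  calc x = conv k x (convOne k) := (conv_one_right x).symm
    _ = conv k x (conv k u u') := by rw [huu']
    _ = conv k (conv k x u) u' := (conv_assoc x u u').symm
    _ = conv k (conv k y u) u' := by rw [h]
    _ = conv k y (conv k u u') := conv_assoc y u u'
    _ = conv k y (convOne k) := by rw [huu']
    _ = y := conv_one_right y

def tmulRepr {M N : Type u} [AddCommGroup M] [Module k M] [Coalgebra k M]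
    [AddCommGroup N] [Module k N] [Coalgebra k N] {x : M} {y : N} {ι κ : Type*}
    (rx : Coalgebra.Repr k x ι) (ry : Coalgebra.Repr k y κ) :
    Coalgebra.Repr k (x ⊗ₜ[k] y) (ι × κ) where
  index := rx.index ×ˢ ry.index
  left := fun p => rx.left p.1 ⊗ₜ[k] ry.left p.2
  right := fun p => rx.right p.1 ⊗ₜ[k] ry.right p.2
  eq := by
    simp only [TensorProduct.comul_def, AlgebraTensorModule.tensorTensorTensorComm_eq,
      AlgebraTensorModule.map_eq, coe_comp, Function.comp_apply,
      TensorProduct.map_tmul]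
    rw [← rx.eq, ← ry.eq]
    simp only [TensorProduct.sum_tmul, TensorProduct.tmul_sum, map_sum, LinearEquiv.coe_coe,
      TensorProduct.tensorTensorTensorComm_tmul, Finset.sum_product]
    rw [Finset.sum_comm]

def commCoalgHom (M N : Type u) [AddCommGroup M] [Module k M] [Coalgebra k M]
    [AddCommGroup N] [Module k N] [Coalgebra k N] : (M ⊗[k] N) →ₗc[k] (N ⊗[k] M) where
  toLinearMap := (TensorProduct.comm k M N).toLinearMap
  counit_comp := by
    ext m n
    simp [mul_comm]
  map_comp_comul := by
    ext m n
    have rm := ℛ k m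
    have rn := ℛ k n
    simp only [TensorProduct.comul_def, AlgebraTensorModule.tensorTensorTensorComm_eq,
      AlgebraTensorModule.map_eq, AlgebraTensorModule.curry_apply,
      curry_apply, coe_restrictScalars, coe_comp, Function.comp_apply, map_tmul,
      LinearEquiv.coe_coe, comm_tmul]
    rw [← rm.eq, ← rn.eq]
    simp [TensorProduct.sum_tmul, TensorProduct.tmul_sum, map_sum]
    rw [Finset.sum_comm]

variable {H : Type u} [Ring H] [HopfAlgebra k H]

def mulCoalgHom (H : Type u) [Ring H] [HopfAlgebra k H] : (H ⊗[k] H) →ₗc[k] H where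
  toLinearMap := LinearMap.mul' k H
  counit_comp := by
    ext h g
    simp [Bialgebra.counit_mul, mul_comm]
  map_comp_comul := by
    ext h g
    have rh := ℛ k h
    have rg := ℛ k g
    simp only [TensorProduct.comul_def, AlgebraTensorModule.tensorTensorTensorComm_eq,
      AlgebraTensorModule.map_eq, AlgebraTensorModule.curry_apply,
      curry_apply, coe_restrictScalars, coe_comp, Function.comp_apply, map_tmul,
      LinearEquiv.coe_coe, mul'_apply, Bialgebra.comul_mul]
    rw [← rh.eq, ← rg.eq]
    simp [TensorProduct.sum_tmul, TensorProduct.tmul_sum, map_sum, Finset.sum_mul_sum,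
      Algebra.TensorProduct.tmul_mul_tmul]
    rw [Finset.sum_comm]


local notation "C" => (Coalgebra.comul : H →ₗ[k] H ⊗[k] H)
local notation "ε" => (Coalgebra.counit : H →ₗ[k] k)
local notation "m" => (LinearMap.mul' k H)
local notation "S" => (HopfAlgebra.antipode k : H →ₗ[k] H)

def Δ₃ : H →ₗ[k] H ⊗[k] (H ⊗[k] H) := LinearMap.lTensor H C ∘ₗ C

def σ₁₂ : H ⊗[k] (H ⊗[k] H) →ₗ[k] H ⊗[k] (H ⊗[k] H) :=
  (TensorProduct.assoc k H H H).toLinearMap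
    ∘ₗ LinearMap.rTensor H (TensorProduct.comm k H H).toLinearMap
    ∘ₗ (TensorProduct.assoc k H H H).symm.toLinearMap

def σ₂₃ : H ⊗[k] (H ⊗[k] H) →ₗ[k] H ⊗[k] (H ⊗[k] H) :=
  LinearMap.lTensor H (TensorProduct.comm k H H).toLinearMap

variable (hcc : (TensorProduct.comm k H H).toLinearMap ∘ₗ (Coalgebra.comul : H →ₗ[k] H ⊗[k] H) = Coalgebra.comul)
include hcc

theorem swap23 : σ₂₃ ∘ₗ Δ₃ = (Δ₃ : H →ₗ[k] _) := by
  unfold σ₂₃ Δ₃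
  rw [← comp_assoc, ← lTensor_comp, hcc]

theorem swap12 : σ₁₂ ∘ₗ Δ₃ = (Δ₃ : H →ₗ[k] _) := by
  unfold σ₁₂ Δ₃
  rw [comp_assoc, comp_assoc, Coalgebra.coassoc_symm,
    ← comp_assoc Coalgebra.comul (LinearMap.rTensor H Coalgebra.comul)
      (LinearMap.rTensor H (TensorProduct.comm k H H).toLinearMap),
    ← rTensor_comp, hcc]
  exact Coalgebra.coassoc (R := k)

-- pure shuffle: tTTComm = assoc⁻¹ ∘ lTensor σ₁₂ ∘ assoc
omit hcc in
theorem pureShuffle :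
    (TensorProduct.tensorTensorTensorComm k H H H H).toLinearMap =
      (TensorProduct.assoc k H H (H ⊗[k] H)).symm.toLinearMap
      ∘ₗ LinearMap.lTensor H σ₁₂
      ∘ₗ (TensorProduct.assoc k H H (H ⊗[k] H)).toLinearMap := by
  ext a b c d
  simp [σ₁₂]

-- assoc ∘ map C C ∘ C = lTensor Δ₃ ∘ C
omit hcc in
theorem delta4 :
    (TensorProduct.assoc k H H (H ⊗[k] H)).toLinearMap ∘ₗ TensorProduct.map C C ∘ₗ C =
      LinearMap.lTensor H Δ₃ ∘ₗ (C : H →ₗ[k] _) := by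
  have h1 : TensorProduct.map C C = LinearMap.lTensor (H ⊗[k] H) C ∘ₗ LinearMap.rTensor H C := by
    rw [lTensor_comp_rTensor]
  have h2 : (TensorProduct.assoc k H H (H ⊗[k] H)).toLinearMap
      ∘ₗ LinearMap.lTensor (H ⊗[k] H) C =
      LinearMap.lTensor H (LinearMap.lTensor H C)
        ∘ₗ (TensorProduct.assoc k H H H).toLinearMap := by
    have := TensorProduct.map_map_comp_assoc_eq (R := k) (LinearMap.id (M := H))
      (LinearMap.id (M := H)) C
    simp only [TensorProduct.map_id] at this
    exact this.symm
  rw [h1, ← comp_assoc, ← comp_assoc, h2, comp_assoc, comp_assoc, Coalgebra.coassoc,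
    ← comp_assoc, ← lTensor_comp]
  rfl

theorem fourLegSwap :
    (TensorProduct.tensorTensorTensorComm k H H H H).toLinearMap
      ∘ₗ TensorProduct.map C C ∘ₗ C = TensorProduct.map C C ∘ₗ (C : H →ₗ[k] _) := by
  rw [pureShuffle]
  calc (TensorProduct.assoc k H H (H ⊗[k] H)).symm.toLinearMap ∘ₗ (LinearMap.lTensor H σ₁₂
      ∘ₗ (TensorProduct.assoc k H H (H ⊗[k] H)).toLinearMap) ∘ₗ TensorProduct.map C C ∘ₗ C
      = (TensorProduct.assoc k H H (H ⊗[k] H)).symm.toLinearMap ∘ₗ LinearMap.lTensor H σ₁₂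
        ∘ₗ LinearMap.lTensor H Δ₃ ∘ₗ C := by
        rw [comp_assoc, delta4]
    _ = (TensorProduct.assoc k H H (H ⊗[k] H)).symm.toLinearMap ∘ₗ LinearMap.lTensor H Δ₃ ∘ₗ C := by
        rw [← comp_assoc (C) _ _, ← lTensor_comp, swap12 hcc]
    _ = TensorProduct.map C C ∘ₗ C := by
        rw [← delta4, ← comp_assoc, ← comp_assoc, LinearEquiv.comp_coe,
          LinearEquiv.self_trans_symm, LinearEquiv.refl_toLinearMap, id_comp]
-- pure algebra: mul' on H ⊗ H
omit hcc in
theorem mulTensor :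
    (LinearMap.mul' k (H ⊗[k] H)) =
      TensorProduct.map (LinearMap.mul' k H) (LinearMap.mul' k H)
        ∘ₗ (TensorProduct.tensorTensorTensorComm k H H H H).toLinearMap := by
  ext a b c d
  simp [Algebra.TensorProduct.tmul_mul_tmul]

omit hcc in
theorem natTTT :
    (TensorProduct.tensorTensorTensorComm k H H H H).toLinearMap
      ∘ₗ LinearMap.lTensor (H ⊗[k] H)
          (TensorProduct.map (HopfAlgebra.antipode k : H →ₗ[k] H) (HopfAlgebra.antipode k)) =
    TensorProduct.map (LinearMap.lTensor H (HopfAlgebra.antipode k : H →ₗ[k] H))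
        (LinearMap.lTensor H (HopfAlgebra.antipode k : H →ₗ[k] H))
      ∘ₗ (TensorProduct.tensorTensorTensorComm k H H H H).toLinearMap := by
  ext a b c d
  simp

omit hcc in
theorem comul_comp_mul :
    (Coalgebra.comul : H →ₗ[k] H ⊗[k] H) ∘ₗ LinearMap.mul' k H =
      LinearMap.mul' k (H ⊗[k] H) ∘ₗ TensorProduct.map Coalgebra.comul Coalgebra.comul := by
  ext h g
  simp [Bialgebra.comul_mul]

omit hcc in
theorem comul_comp_unit :
    (Coalgebra.comul : H →ₗ[k] H ⊗[k] H) ∘ₗ Algebra.linearMap k H =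
      Algebra.linearMap k (H ⊗[k] H) := by
  apply LinearMap.ext_ring
  simp [Algebra.TensorProduct.one_def]

omit hcc in
theorem counit_comul :
    (Coalgebra.counit : H ⊗[k] H →ₗ[k] k) ∘ₗ (Coalgebra.comul : H →ₗ[k] H ⊗[k] H) =
      Coalgebra.counit := by
  ext a
  have r := ℛ k a
  have key := Coalgebra.sum_counit_tmul_map_eq (R := k) (Coalgebra.counit : H →ₗ[k] k) a
    (repr := r)
  have key2 := congrArg (LinearMap.mul' k k) key
  simp only [map_sum, mul'_apply, one_mul] at key2
  simp only [coe_comp, Function.comp_apply, TensorProduct.counit_def]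
  rw [← r.eq]
  simpa [map_sum] using key2

omit hcc in
theorem counit_antipode :
    (Coalgebra.counit : H →ₗ[k] k) ∘ₗ (HopfAlgebra.antipode k : H →ₗ[k] H) =
      Coalgebra.counit := by
  ext a
  have r := ℛ k a
  have key := congrArg (Coalgebra.counit : H →ₗ[k] k)
    (HopfAlgebra.mul_antipode_rTensor_comul_apply (R := k) a)
  rw [← r.eq] at key
  simp only [map_sum, rTensor_tmul, mul'_apply, Bialgebra.counit_mul,
    Bialgebra.counit_algebraMap] at key
  have h2 : ∑ i ∈ r.index, (Coalgebra.counit (R := k) (r.right i)) • r.left i = a := by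
    have h3 := congrArg (TensorProduct.rid k H) (Coalgebra.sum_tmul_counit_eq (R := k) r)
    simp only [map_sum, TensorProduct.rid_tmul, one_smul] at h3
    exact h3
  calc Coalgebra.counit (R := k) (HopfAlgebra.antipode k a)
      = Coalgebra.counit (R := k) (HopfAlgebra.antipode k
          (∑ i ∈ r.index, (Coalgebra.counit (R := k) (r.right i)) • r.left i)) := by rw [h2]
    _ = ∑ i ∈ r.index, Coalgebra.counit (R := k) (HopfAlgebra.antipode k (r.left i)) *
          Coalgebra.counit (R := k) (r.right i) := by
        simp [map_sum, map_smul, smul_eq_mul, mul_comm]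
    _ = Coalgebra.counit (R := k) a := key

omit hcc in
theorem uEps_tensor :
    TensorProduct.map (Algebra.linearMap k H ∘ₗ Coalgebra.counit)
        (Algebra.linearMap k H ∘ₗ Coalgebra.counit) ∘ₗ (Coalgebra.comul : H →ₗ[k] H ⊗[k] H) =
      Algebra.linearMap k (H ⊗[k] H) ∘ₗ Coalgebra.counit := by
  ext a
  have r := ℛ k a
  have key := Coalgebra.sum_counit_tmul_map_eq (R := k) (Coalgebra.counit : H →ₗ[k] k) a
    (repr := r)
  have key2 := congrArg (TensorProduct.map (Algebra.linearMap k H) (Algebra.linearMap k H)) key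
  simp only [map_sum, TensorProduct.map_tmul, Algebra.linearMap_apply, map_one] at key2
  simp only [coe_comp, Function.comp_apply]
  rw [← r.eq]
  simp only [map_sum, TensorProduct.map_tmul, coe_comp, Function.comp_apply,
    Algebra.linearMap_apply]
  rw [key2, Algebra.TensorProduct.algebraMap_apply]
  rw [Algebra.algebraMap_eq_smul_one]
  rw [TensorProduct.tmul_smul, TensorProduct.smul_tmul']


def comulCoalgHom : H →ₗc[k] H ⊗[k] H where
  toLinearMap := Coalgebra.comul
  counit_comp := counit_comul
  map_comp_comul := by
    show TensorProduct.map Coalgebra.comul Coalgebra.comul ∘ₗ Coalgebra.comul = _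
    rw [TensorProduct.comul_def, AlgebraTensorModule.tensorTensorTensorComm_eq,
      AlgebraTensorModule.map_eq, comp_assoc, fourLegSwap hcc]

theorem antipode_comul :
    TensorProduct.map (HopfAlgebra.antipode k : H →ₗ[k] H) (HopfAlgebra.antipode k)
        ∘ₗ Coalgebra.comul = Coalgebra.comul ∘ₗ (HopfAlgebra.antipode k : H →ₗ[k] H) := by
  set F : H →ₗ[k] H ⊗[k] H := Coalgebra.comul ∘ₗ (HopfAlgebra.antipode k) with hFdef
  set G : H →ₗ[k] H ⊗[k] H :=
    TensorProduct.map (HopfAlgebra.antipode k) (HopfAlgebra.antipode k) ∘ₗ Coalgebra.comul with hGdef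
  have hF : conv (k := k) F Coalgebra.comul = convOne (k := k) := by
    unfold conv
    have e1 : TensorProduct.map F (Coalgebra.comul : H →ₗ[k] H ⊗[k] H) =
        TensorProduct.map Coalgebra.comul Coalgebra.comul
          ∘ₗ LinearMap.rTensor H (HopfAlgebra.antipode k) := by
      rw [hFdef]
      rw [show (LinearMap.rTensor H (HopfAlgebra.antipode k (A := H))) =
        TensorProduct.map (HopfAlgebra.antipode k) LinearMap.id from rfl]
      rw [← TensorProduct.map_comp, comp_id]
    rw [e1, ← comp_assoc, ← comp_assoc, ← comul_comp_mul, comp_assoc, comp_assoc,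
      HopfAlgebra.mul_antipode_rTensor_comul, ← comp_assoc, comul_comp_unit]
    rfl
  have hG : conv (k := k) Coalgebra.comul G = convOne (k := k) := by
    unfold conv
    have e3 : TensorProduct.map (Coalgebra.comul : H →ₗ[k] H ⊗[k] H) G =
        LinearMap.lTensor (H ⊗[k] H)
            (TensorProduct.map (HopfAlgebra.antipode k) (HopfAlgebra.antipode k))
          ∘ₗ TensorProduct.map Coalgebra.comul Coalgebra.comul := by
      rw [hGdef]
      rw [show (LinearMap.lTensor (H ⊗[k] H) (TensorProduct.map
        (HopfAlgebra.antipode k (A := H)) (HopfAlgebra.antipode k))) =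
        TensorProduct.map LinearMap.id (TensorProduct.map (HopfAlgebra.antipode k)
          (HopfAlgebra.antipode k)) from rfl]
      rw [← TensorProduct.map_comp, id_comp]
    rw [e3, mulTensor]
    calc (TensorProduct.map (LinearMap.mul' k H) (LinearMap.mul' k H)
          ∘ₗ (TensorProduct.tensorTensorTensorComm k H H H H).toLinearMap)
          ∘ₗ (LinearMap.lTensor (H ⊗[k] H)
              (TensorProduct.map (HopfAlgebra.antipode k) (HopfAlgebra.antipode k))
            ∘ₗ TensorProduct.map Coalgebra.comul Coalgebra.comul) ∘ₗ Coalgebra.comul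
        = TensorProduct.map (LinearMap.mul' k H) (LinearMap.mul' k H)
            ∘ₗ TensorProduct.map (LinearMap.lTensor H (HopfAlgebra.antipode k))
                (LinearMap.lTensor H (HopfAlgebra.antipode k))
            ∘ₗ (TensorProduct.tensorTensorTensorComm k H H H H).toLinearMap
            ∘ₗ TensorProduct.map Coalgebra.comul Coalgebra.comul ∘ₗ Coalgebra.comul := by
          rw [← comp_assoc _ _ (TensorProduct.map (LinearMap.mul' k H) (LinearMap.mul' k H))]
          rw [comp_assoc, comp_assoc]
          rw [← comp_assoc (TensorProduct.map Coalgebra.comul Coalgebra.comul ∘ₗ Coalgebra.comul)]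
          rw [natTTT]
          rw [comp_assoc, comp_assoc]
    _ = TensorProduct.map (LinearMap.mul' k H) (LinearMap.mul' k H)
            ∘ₗ TensorProduct.map (LinearMap.lTensor H (HopfAlgebra.antipode k))
                (LinearMap.lTensor H (HopfAlgebra.antipode k))
            ∘ₗ TensorProduct.map Coalgebra.comul Coalgebra.comul ∘ₗ Coalgebra.comul := by
          rw [fourLegSwap hcc]
    _ = TensorProduct.map
            (LinearMap.mul' k H ∘ₗ LinearMap.lTensor H (HopfAlgebra.antipode k) ∘ₗ Coalgebra.comul)
            (LinearMap.mul' k H ∘ₗ LinearMap.lTensor H (HopfAlgebra.antipode k) ∘ₗ Coalgebra.comul)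
            ∘ₗ Coalgebra.comul := by
          rw [← comp_assoc, ← comp_assoc, ← TensorProduct.map_comp, ← TensorProduct.map_comp,
            comp_assoc]
    _ = convOne (k := k) := by
          rw [HopfAlgebra.mul_antipode_lTensor_comul, uEps_tensor]
          rfl
  calc G = conv (k := k) (convOne (k := k)) G := (conv_one_left G).symm
    _ = conv (k := k) (conv (k := k) F Coalgebra.comul) G := by rw [hF]
    _ = conv (k := k) F (conv (k := k) Coalgebra.comul G) := conv_assoc _ _ _
    _ = conv (k := k) F (convOne (k := k)) := by rw [hG]
    _ = F := conv_one_right F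

def antipodeCoalgHom : H →ₗc[k] H where
  toLinearMap := (HopfAlgebra.antipode k)
  counit_comp := counit_antipode
  map_comp_comul := antipode_comul hcc

-- π : H ⊗ H →ₗc H,  x ⊗ y ↦ ε(y) • x
def piC : (H ⊗[k] H) →ₗc[k] H :=
  (Coalgebra.TensorProduct.rid k k H).toCoalgHom.comp
    (CoalgHom.lTensor H (Coalgebra.counitCoalgHom k H))

@[simp] theorem piC_tmul (x y : H) :
    (piC (k := k) (H := H)) (x ⊗ₜ[k] y) = Coalgebra.counit (R := k) y • x := rfl

def adC : (H ⊗[k] H) →ₗc[k] H :=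
  (mulCoalgHom H).comp <| (CoalgHom.lTensor H (mulCoalgHom H)).comp <|
  (CoalgHom.lTensor H (CoalgHom.lTensor H (antipodeCoalgHom hcc))).comp <|
  (CoalgHom.lTensor H (commCoalgHom H H)).comp <|
  (Coalgebra.TensorProduct.assoc k k H H H).toCoalgHom.comp <|
  (CoalgHom.rTensor H (comulCoalgHom hcc))

def tauC : (H ⊗[k] H) →ₗc[k] (H ⊗[k] H) :=
  (Coalgebra.TensorProduct.map (adC hcc) (CoalgHom.id k H)).comp <|
  (Coalgebra.TensorProduct.assoc k k H H H).symm.toCoalgHom.comp <|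
  (CoalgHom.lTensor H (commCoalgHom H H)).comp <|
  (Coalgebra.TensorProduct.assoc k k H H H).toCoalgHom.comp <|
  (CoalgHom.rTensor H (comulCoalgHom hcc))

omit hcc in
theorem adjointTwist_repr (a b : H) (r : Coalgebra.Repr k a (H × H))
    (r1 : (i : H × H) → Coalgebra.Repr k (r.left i) (H × H)) :
    adjointTwist k H (a ⊗ₜ[k] b) =
      ∑ i ∈ r.index, ∑ j ∈ (r1 i).index,
        ((r1 i).left j * b * HopfAlgebra.antipode k ((r1 i).right j)) ⊗ₜ[k] r.right i := by
  simp only [adjointTwist, coe_comp, Function.comp_apply, TensorProduct.map_tmul, id_coe, id_eq]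
  rw [← r.eq]
  simp only [TensorProduct.sum_tmul, map_sum, TensorProduct.map_tmul, id_coe, id_eq]
  refine Finset.sum_congr rfl fun i _ => ?_
  rw [← (r1 i).eq]
  simp only [TensorProduct.sum_tmul, map_sum, TensorProduct.map_tmul, id_coe, id_eq,
    TensorProduct.assoc_tmul, TensorProduct.comm_tmul, TensorProduct.tensorTensorTensorComm_tmul,
    TensorProduct.assoc_symm_tmul, LinearEquiv.coe_coe, mul'_apply, coe_comp,
    Function.comp_apply]

theorem tau_eq : (tauC (k := k) (H := H) hcc).toLinearMap = adjointTwist k H := by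
  apply TensorProduct.ext'
  intro a b
  have r := ℛ k a
  have r1 : (i : H × H) → Coalgebra.Repr k (r.left i) (H × H) := fun i => ℛ k (r.left i)
  rw [adjointTwist_repr a b r r1]
  show tauC hcc (a ⊗ₜ[k] b) = _
  simp only [tauC, adC, CoalgHom.comp_apply]
  show (Coalgebra.TensorProduct.map _ _) ((TensorProduct.assoc k H H H).symm.toLinearMap
    ((LinearMap.lTensor H (TensorProduct.comm k H H).toLinearMap)
      ((TensorProduct.assoc k H H H).toLinearMap
        ((LinearMap.rTensor H Coalgebra.comul) (a ⊗ₜ[k] b))))) = _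
  rw [show (LinearMap.rTensor H (Coalgebra.comul (R := k) (A := H))) (a ⊗ₜ[k] b)
    = Coalgebra.comul (R := k) a ⊗ₜ[k] b from rfl, ← r.eq]
  simp only [TensorProduct.sum_tmul, map_sum, TensorProduct.assoc_tmul, lTensor_tmul,
    LinearEquiv.coe_coe, TensorProduct.comm_tmul, TensorProduct.assoc_symm_tmul]
  refine Finset.sum_congr rfl fun i _ => ?_
  show (adC hcc ((r.left i) ⊗ₜ[k] b)) ⊗ₜ[k] (r.right i) = _
  simp only [adC, CoalgHom.comp_apply]
  show ((mulCoalgHom H) ((LinearMap.lTensor H (LinearMap.mul' k H))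
    ((LinearMap.lTensor H (LinearMap.lTensor H (HopfAlgebra.antipode k)))
      ((LinearMap.lTensor H (TensorProduct.comm k H H).toLinearMap)
        ((TensorProduct.assoc k H H H).toLinearMap
          ((LinearMap.rTensor H Coalgebra.comul) ((r.left i) ⊗ₜ[k] b))))))) ⊗ₜ[k] r.right i = _
  rw [show (LinearMap.rTensor H (Coalgebra.comul (R := k) (A := H))) ((r.left i) ⊗ₜ[k] b)
    = Coalgebra.comul (R := k) (r.left i) ⊗ₜ[k] b from rfl, ← (r1 i).eq]
  simp only [TensorProduct.sum_tmul, map_sum, TensorProduct.assoc_tmul, lTensor_tmul,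
    LinearEquiv.coe_coe, TensorProduct.comm_tmul]
  simp only [show ∀ x y : H, (mulCoalgHom H) (x ⊗ₜ[k] y) = x * y from fun _ _ => rfl,
    mul'_apply, mul_assoc]

set_option synthInstance.maxHeartbeats 1000000 in
theorem mul_adjointTwist :
    LinearMap.mul' k H ∘ₗ adjointTwist k H = LinearMap.mul' k H := by
  apply TensorProduct.ext'
  intro a b
  have r := ℛ k a
  have r1 : (i : H × H) → Coalgebra.Repr k (r.left i) (H × H) := fun i => ℛ k (r.left i)
  set SS : H →ₗ[k] H := (HopfAlgebra.antipode k) with hSS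
  set Tb : H ⊗[k] (H ⊗[k] H) →ₗ[k] H := LinearMap.mul' k H ∘ₗ
    TensorProduct.map (LinearMap.mulRight k b)
      (LinearMap.mul' k H ∘ₗ LinearMap.rTensor H SS) with hTb
  have hTb_tmul : ∀ x y z : H, Tb (x ⊗ₜ[k] (y ⊗ₜ[k] z)) = x * b * (SS y * z) := by
    intro x y z; simp [hTb]
  have step1 : ∑ i ∈ r.index, ∑ j ∈ (r1 i).index,
      ((r1 i).left j) ⊗ₜ[k] (((r1 i).right j) ⊗ₜ[k] (r.right i)) = Δ₃ (k := k) a := by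
    have c := Coalgebra.coassoc_apply (R := k) a
    have lhs_eq : (Coalgebra.comul (R := k)).rTensor H (Coalgebra.comul (R := k) a) =
        ∑ i ∈ r.index, ∑ j ∈ (r1 i).index,
          (((r1 i).left j) ⊗ₜ[k] ((r1 i).right j)) ⊗ₜ[k] (r.right i) := by
      rw [← r.eq]
      simp only [map_sum, rTensor_tmul]
      refine Finset.sum_congr rfl fun i _ => ?_
      rw [← (r1 i).eq, TensorProduct.sum_tmul]
    rw [lhs_eq] at c
    simp only [map_sum, TensorProduct.assoc_tmul] at c
    exact c
  have lhs_eq : LinearMap.mul' k H (adjointTwist k H (a ⊗ₜ[k] b)) =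
      Tb (Δ₃ (k := k) a) := by
    rw [adjointTwist_repr a b r r1, ← step1]
    simp only [map_sum, hTb_tmul, mul'_apply, mul_assoc, hSS]
  rw [coe_comp, Function.comp_apply, lhs_eq]
  have h23 := LinearMap.congr_fun (swap23 hcc) a
  have h12 := LinearMap.congr_fun (swap12 hcc) a
  simp only [coe_comp, Function.comp_apply] at h23 h12
  have swaps : Δ₃ (k := k) a = σ₁₂ (σ₂₃ (Δ₃ (k := k) a)) := by rw [h23, h12]
  rw [swaps]
  have pure : Tb ∘ₗ σ₁₂ ∘ₗ (σ₂₃ : H ⊗[k] (H ⊗[k] H) →ₗ[k] _) =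
      (LinearMap.mul' k H ∘ₗ TensorProduct.map (LinearMap.mulRight k b) LinearMap.id
          ∘ₗ (TensorProduct.comm k H H).toLinearMap)
        ∘ₗ LinearMap.rTensor H (LinearMap.mul' k H ∘ₗ LinearMap.rTensor H SS)
        ∘ₗ (TensorProduct.assoc k H H H).symm.toLinearMap := by
    ext x y z
    simp [hTb, σ₁₂, σ₂₃, mul_assoc]
  have := LinearMap.congr_fun pure (Δ₃ (k := k) a)
  simp only [coe_comp, Function.comp_apply] at this
  rw [this]
  have hsym : (TensorProduct.assoc k H H H).symm (Δ₃ (k := k) a) =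
      (Coalgebra.comul (R := k)).rTensor H (Coalgebra.comul (R := k) a) := by
    rw [show Δ₃ (k := k) a = (Coalgebra.comul (R := k)).lTensor H
      (Coalgebra.comul (R := k) a) from rfl]
    exact Coalgebra.coassoc_symm_apply a
  simp only [LinearEquiv.coe_coe]
  rw [hsym]
  have collapse : (LinearMap.rTensor H (LinearMap.mul' k H ∘ₗ LinearMap.rTensor H SS))
      ((Coalgebra.comul (R := k)).rTensor H (Coalgebra.comul (R := k) a)) =
      (1 : H) ⊗ₜ[k] a := by
    rw [← LinearMap.comp_apply, ← rTensor_comp]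
    have hax : (LinearMap.mul' k H ∘ₗ LinearMap.rTensor H SS) ∘ₗ Coalgebra.comul =
        Algebra.linearMap k H ∘ₗ Coalgebra.counit := by
      rw [comp_assoc]; exact HopfAlgebra.mul_antipode_rTensor_comul
    rw [hax, rTensor_comp, LinearMap.comp_apply, Coalgebra.rTensor_counit_comul]
    simp
  rw [collapse]
  simp

end AuxMachinery

noncomputable section
variable (k : Type u) [Field k] (H : Type u) [Ring H] [HopfAlgebra k H]
variable {U : Type u} [Ring U] [Algebra k U]

/-- The linear map `H ⊗ H →ₗ U`, `h ⊗ g ↦ γ(h₁) γ(g₁) γ'(h₂g₂)` (Sweedler notation);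
when `γ'` is the convolution inverse of `γ` this is the cocycle attached to a splitting
map `γ`. -/
def gammaCocycle (γ γ' : H →ₗ[k] U) : H ⊗[k] H →ₗ[k] U :=
  LinearMap.mul' k U
    ∘ₗ TensorProduct.map (LinearMap.mul' k U ∘ₗ TensorProduct.map γ γ)
        (γ' ∘ₗ LinearMap.mul' k H)
    ∘ₗ Coalgebra.comul

/-- The linear map `H ⊗ H →ₗ U`, `h ⊗ g ↦ γ(h₁ g S(h₂))` (Sweedler notation). -/
def equivLHS (γ : H →ₗ[k] U) : H ⊗[k] H →ₗ[k] U :=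
  γ ∘ₗ (LinearMap.mul' k H ∘ₗ TensorProduct.map LinearMap.id (LinearMap.mul' k H))
    ∘ₗ TensorProduct.map LinearMap.id (TensorProduct.map LinearMap.id (HopfAlgebra.antipode k))
    ∘ₗ TensorProduct.map LinearMap.id (TensorProduct.comm k H H).toLinearMap
    ∘ₗ (TensorProduct.assoc k H H H).toLinearMap
    ∘ₗ TensorProduct.map Coalgebra.comul LinearMap.id

/-- The linear map `H ⊗ H →ₗ U`, `h ⊗ g ↦ γ(h₁) γ(g) γ'(h₂)` (Sweedler notation). -/
def equivRHS (γ γ' : H →ₗ[k] U) : H ⊗[k] H →ₗ[k] U :=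
  LinearMap.mul' k U
    ∘ₗ TensorProduct.map γ (LinearMap.mul' k U ∘ₗ TensorProduct.map γ γ')
    ∘ₗ TensorProduct.map LinearMap.id (TensorProduct.comm k H H).toLinearMap
    ∘ₗ (TensorProduct.assoc k H H H).toLinearMap
    ∘ₗ TensorProduct.map Coalgebra.comul LinearMap.id

open Coalgebra
theorem counit_smul_sum' {a : H} {ι : Type*} (r : Coalgebra.Repr k a ι) :
    ∑ i ∈ r.index, Coalgebra.counit (R := k) (r.right i) • r.left i = a := by
  have h3 := congrArg (TensorProduct.rid k H) (Coalgebra.sum_tmul_counit_eq (R := k) r)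
  simp only [map_sum, TensorProduct.rid_tmul, one_smul] at h3
  exact h3

theorem equivLHS_repr (γ : H →ₗ[k] U) (x y : H) {ι : Type*} (rx : Coalgebra.Repr k x ι) :
    equivLHS k H γ (x ⊗ₜ[k] y) = ∑ j ∈ rx.index,
      γ (rx.left j * (y * HopfAlgebra.antipode k (rx.right j))) := by
  simp only [equivLHS, coe_comp, Function.comp_apply, TensorProduct.map_tmul, id_coe, id_eq]
  rw [← rx.eq]
  simp only [TensorProduct.sum_tmul, map_sum, LinearEquiv.coe_coe, TensorProduct.assoc_tmul,
    lTensor_tmul, TensorProduct.map_tmul, TensorProduct.comm_tmul, mul'_apply, id_coe, id_eq]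

theorem equivRHS_conv (γ γ' : H →ₗ[k] U) :
    equivRHS k H γ γ' = conv k (LinearMap.mul' k U ∘ₗ TensorProduct.map γ γ)
      (γ' ∘ₗ (piC (k := k) (H := H)).toLinearMap) := by
  apply TensorProduct.ext'
  intro h g
  have rh := ℛ k h
  have rg := ℛ k g
  have lhs : equivRHS k H γ γ' (h ⊗ₜ[k] g) =
      ∑ i ∈ rh.index, γ (rh.left i) * (γ g * γ' (rh.right i)) := by
    simp only [equivRHS, coe_comp, Function.comp_apply, TensorProduct.map_tmul, id_coe, id_eq]
    rw [← rh.eq]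
    simp only [TensorProduct.sum_tmul, map_sum, LinearEquiv.coe_coe, TensorProduct.assoc_tmul,
      TensorProduct.map_tmul, TensorProduct.comm_tmul, mul'_apply, id_coe, id_eq, coe_comp,
      Function.comp_apply]
  rw [lhs, conv_repr _ _ (tmulRepr rh rg)]
  simp only [tmulRepr, Finset.sum_product, coe_comp, Function.comp_apply,
    TensorProduct.map_tmul, mul'_apply, piC_tmul, map_smul]
  simp only [show ∀ x y : H, (piC (k := k) (H := H)).toLinearMap (x ⊗ₜ[k] y) =
    Coalgebra.counit (R := k) y • x from fun _ _ => rfl, map_smul]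
  refine Finset.sum_congr rfl fun i _ => ?_
  have key : ∑ j ∈ rg.index, Coalgebra.counit (R := k) (rg.right j) • γ (rg.left j) = γ g := by
    simp_rw [← map_smul]
    rw [← map_sum, counit_smul_sum' k H rg]
  calc γ (rh.left i) * (γ g * γ' (rh.right i))
      = γ (rh.left i) * ((∑ j ∈ rg.index,
          Coalgebra.counit (R := k) (rg.right j) • γ (rg.left j)) * γ' (rh.right i)) := by
        rw [key]
    _ = ∑ j ∈ rg.index, γ (rh.left i) * γ (rg.left j) *
          (Coalgebra.counit (R := k) (rg.right j) • γ' (rh.right i)) := by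
        rw [Finset.sum_mul, Finset.mul_sum]
        refine Finset.sum_congr rfl fun j _ => ?_
        simp only [smul_mul_assoc, mul_smul_comm, mul_assoc]

theorem A_tau (γ : H →ₗ[k] U) :
    (LinearMap.mul' k U ∘ₗ TensorProduct.map γ γ) ∘ₗ adjointTwist k H =
      conv k (equivLHS k H γ) (γ ∘ₗ (piC (k := k) (H := H)).toLinearMap) := by
  apply TensorProduct.ext'
  intro a b
  have r := ℛ k a
  have r1 : (i : H × H) → Coalgebra.Repr k (r.left i) (H × H) := fun i => ℛ k (r.left i)
  have rb := ℛ k b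
  rw [coe_comp, Function.comp_apply, adjointTwist_repr a b r r1,
    conv_repr _ _ (tmulRepr r rb)]
  simp only [map_sum, TensorProduct.map_tmul, mul'_apply, tmulRepr, Finset.sum_product,
    coe_comp, Function.comp_apply, piC_tmul, map_smul]
  simp only [show ∀ x y : H, (piC (k := k) (H := H)).toLinearMap (x ⊗ₜ[k] y) =
    Coalgebra.counit (R := k) y • x from fun _ _ => rfl, map_smul]
  refine Finset.sum_congr rfl fun i _ => ?_
  have inner : ∀ x : H, ∑ j ∈ rb.index, Coalgebra.counit (R := k) (rb.right j) •
      equivLHS k H γ (x ⊗ₜ[k] rb.left j) = equivLHS k H γ (x ⊗ₜ[k] b) := by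
    intro x
    rw [show (x ⊗ₜ[k] b) = x ⊗ₜ[k] (∑ j ∈ rb.index,
      Coalgebra.counit (R := k) (rb.right j) • rb.left j) from by rw [counit_smul_sum' k H rb]]
    rw [TensorProduct.tmul_sum, map_sum]
    exact Finset.sum_congr rfl fun j _ => by rw [TensorProduct.tmul_smul, map_smul]
  calc ∑ j ∈ (r1 i).index,
        γ ((r1 i).left j * b * HopfAlgebra.antipode k ((r1 i).right j)) * γ (r.right i)
      = equivLHS k H γ (r.left i ⊗ₜ[k] b) * γ (r.right i) := by
        rw [equivLHS_repr k H γ _ b (r1 i), Finset.sum_mul]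
        exact Finset.sum_congr rfl fun j _ => by rw [mul_assoc]
    _ = (∑ j ∈ rb.index, Coalgebra.counit (R := k) (rb.right j) •
          equivLHS k H γ (r.left i ⊗ₜ[k] rb.left j)) * γ (r.right i) := by
        rw [inner]
    _ = ∑ j ∈ rb.index, equivLHS k H γ (r.left i ⊗ₜ[k] rb.left j) *
          (Coalgebra.counit (R := k) (rb.right j) • γ (r.right i)) := by
        rw [Finset.sum_mul]
        exact Finset.sum_congr rfl fun j _ => by
          rw [smul_mul_assoc, mul_smul_comm]

theorem sigma_tau (hcc : IsCocommutative k H) (γ γ' : H →ₗ[k] U) :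
    gammaCocycle k H γ γ' ∘ₗ adjointTwist k H =
      conv k ((LinearMap.mul' k U ∘ₗ TensorProduct.map γ γ) ∘ₗ adjointTwist k H)
        ((γ' ∘ₗ LinearMap.mul' k H) ∘ₗ adjointTwist k H) := by
  have hcc' : (TensorProduct.comm k H H).toLinearMap
      ∘ₗ (Coalgebra.comul : H →ₗ[k] H ⊗[k] H) = Coalgebra.comul := hcc
  rw [← tau_eq hcc', show gammaCocycle k H γ γ' =
    conv k (LinearMap.mul' k U ∘ₗ TensorProduct.map γ γ) (γ' ∘ₗ LinearMap.mul' k H) from rfl]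
  exact (conv_comp (tauC hcc') _ _).symm

/-- Let `H` be a cocommutative Hopf algebra over a field `k`, `U` a
`k`-algebra, and `γ : H → U` a convolution-invertible linear map with convolution inverse
`γ⁻¹ = γ'`.  Suppose the linear map `σ(h ⊗ g) = γ(h₁) γ(g₁) γ⁻¹(h₂g₂)` takes all its values
in the center of `U`.  Then `γ` is equivariant, i.e. `γ(h₁ g S(h₂)) = γ(h₁) γ(g) γ⁻¹(h₂)`
for all `h, g ∈ H`, if and only if `σ(a ⊗ b) = σ(a₁ b S(a₂) ⊗ a₃)` for all `a, b ∈ H`. -/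
theorem gamma_equivariant_iff_cocycle_equivariant
    (hcc : IsCocommutative k H) (γ γ' : H →ₗ[k] U)
    (hγ : conv k γ γ' = convOne k) (hγ' : conv k γ' γ = convOne k)
    (hcentral : ∀ x : H ⊗[k] H, gammaCocycle k H γ γ' x ∈ Set.center U) :
    equivLHS k H γ = equivRHS k H γ γ' ↔
      IsEquivariant k H (gammaCocycle k H γ γ') := by
  have hcc' : (TensorProduct.comm k H H).toLinearMap
      ∘ₗ (Coalgebra.comul : H →ₗ[k] H ⊗[k] H) = Coalgebra.comul := hcc
  have hτB : (γ' ∘ₗ LinearMap.mul' k H) ∘ₗ adjointTwist k H = γ' ∘ₗ LinearMap.mul' k H := by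
    rw [comp_assoc, mul_adjointTwist hcc']
  have hB'B : conv k (γ' ∘ₗ LinearMap.mul' k H) (γ ∘ₗ LinearMap.mul' k H) = convOne k := by
    rw [show (LinearMap.mul' k H) = (mulCoalgHom H).toLinearMap from rfl, conv_comp, hγ',
      convOne_comp]
  have hDC' : conv k (γ ∘ₗ (piC (k := k) (H := H)).toLinearMap)
      (γ' ∘ₗ (piC (k := k) (H := H)).toLinearMap) = convOne k := by
    rw [conv_comp, hγ, convOne_comp]
  have hC'D : conv k (γ' ∘ₗ (piC (k := k) (H := H)).toLinearMap)
      (γ ∘ₗ (piC (k := k) (H := H)).toLinearMap) = convOne k := by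
    rw [conv_comp, hγ', convOne_comp]
  have hERHS : conv k (equivRHS k H γ γ') (γ ∘ₗ (piC (k := k) (H := H)).toLinearMap) =
      LinearMap.mul' k U ∘ₗ TensorProduct.map γ γ := by
    rw [equivRHS_conv k H γ γ', conv_assoc, hC'D, conv_one_right]
  have hστ : gammaCocycle k H γ γ' ∘ₗ adjointTwist k H =
      conv k (conv k (equivLHS k H γ) (γ ∘ₗ (piC (k := k) (H := H)).toLinearMap))
        (γ' ∘ₗ LinearMap.mul' k H) := by
    rw [sigma_tau k H hcc γ γ', A_tau k H γ, hτB]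
  constructor
  · intro hE
    show gammaCocycle k H γ γ' ∘ₗ adjointTwist k H = gammaCocycle k H γ γ'
    rw [hστ, hE, hERHS]
    rfl
  · intro hEq
    have hEq' : gammaCocycle k H γ γ' ∘ₗ adjointTwist k H = gammaCocycle k H γ γ' := hEq
    have h2 : conv k (conv k (equivLHS k H γ) (γ ∘ₗ (piC (k := k) (H := H)).toLinearMap))
        (γ' ∘ₗ LinearMap.mul' k H) =
        conv k (conv k (equivRHS k H γ γ') (γ ∘ₗ (piC (k := k) (H := H)).toLinearMap))
        (γ' ∘ₗ LinearMap.mul' k H) := by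
      rw [← hστ, hEq', hERHS]
      rfl
    have h3 := conv_cancel_right _ _ _ _ h2 hB'B
    exact conv_cancel_right _ _ _ _ h3 hDC'

end
end

section
/- The center of the F-algebra A ⊗_K F equals the image of Z(A) ⊗_K F under the canonical embedding, where Z(A) is the center of A; consequently, the dimension of the center of A ⊗_K F as an F-vector space equals the dimension of Z(A) as a K-vector space. -/
open TensorProduct

set_option synthInstance.maxHeartbeats 400000
set_option maxHeartbeats 800000

universe u

/-- Let `K` be a field, `F` a field extension of `K`, and `A` an
associative unital `K`-algebra.  The center of the `F`-algebra `F ⊗_K A` equals the image of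
`F ⊗_K Z(A)` under the canonical map, where `Z(A)` is the center of `A`; consequently the
dimension of the center of `F ⊗_K A` over `F` equals the dimension of `Z(A)` over `K`. -/
theorem center_baseChange (K F A : Type u) [Field K] [Field F] [Algebra K F]
    [Ring A] [Algebra K A] :
    (Subalgebra.center F (F ⊗[K] A) : Set (F ⊗[K] A)) =
      Set.range ⇑(Algebra.TensorProduct.map (AlgHom.id K F) (Subalgebra.center K A).val) ∧
    Module.rank F (Subalgebra.center F (F ⊗[K] A)) =
      Module.rank K (Subalgebra.center K A) := by
  classical
  set Z := Subalgebra.center K A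
  set φ := Algebra.TensorProduct.map (AlgHom.id K F) Z.val with hφdef
  -- the `F`-linear version of φ
  set ψ := Algebra.TensorProduct.map (AlgHom.id F F) Z.val with hψdef
  have hψφ : ∀ x, ψ x = φ x := by
    intro x
    induction x using TensorProduct.induction_on with
    | zero => simp
    | tmul f z => simp [hφdef, hψdef]
    | add x y hx hy => simp [map_add, hx, hy]
  -- a basis of F over K
  set ι := Module.Basis.ofVectorSpaceIndex K F
  set b : Module.Basis ι K F := Module.Basis.ofVectorSpace K F
  -- the linear equivalence F ⊗ A ≃ (ι →₀ A)
  set e : F ⊗[K] A ≃ₗ[K] (ι →₀ A) :=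
    (TensorProduct.congr b.repr (LinearEquiv.refl K A)).trans
      (TensorProduct.finsuppScalarLeft K A ι) with hedef
  have he_tmul : ∀ (f : F) (m : A) (i : ι), e (f ⊗ₜ[K] m) i = b.repr f i • m := by
    intro f m i
    simp [hedef, TensorProduct.finsuppScalarLeft_apply_tmul_apply]
  have he_right : ∀ (y : F ⊗[K] A) (a : A) (i : ι),
      e (y * (1 ⊗ₜ[K] a)) i = e y i * a := by
    intro y a i
    induction y using TensorProduct.induction_on with
    | zero => simp
    | tmul f m =>
        rw [Algebra.TensorProduct.tmul_mul_tmul, he_tmul, he_tmul, mul_one,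
          smul_mul_assoc]
    | add x y hx hy =>
        rw [add_mul, map_add, Finsupp.add_apply, hx, hy, map_add, Finsupp.add_apply,
          add_mul]
  have he_left : ∀ (y : F ⊗[K] A) (a : A) (i : ι),
      e ((1 ⊗ₜ[K] a) * y) i = a * e y i := by
    intro y a i
    induction y using TensorProduct.induction_on with
    | zero => simp
    | tmul f m =>
        rw [Algebra.TensorProduct.tmul_mul_tmul, he_tmul, he_tmul, one_mul,
          mul_smul_comm]
    | add x y hx hy =>
        rw [mul_add, map_add, Finsupp.add_apply, hx, hy, map_add, Finsupp.add_apply,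
          mul_add]
  have he_symm_single : ∀ (i : ι) (a : A), e.symm (Finsupp.single i a) = (b i) ⊗ₜ[K] a := by
    intro i a
    apply e.injective
    rw [LinearEquiv.apply_symm_apply]
    ext j
    rw [he_tmul, Module.Basis.repr_self, Finsupp.single_apply, Finsupp.single_apply]
    split <;> simp_all
  -- the set equality
  have hset : (Subalgebra.center F (F ⊗[K] A) : Set (F ⊗[K] A)) = Set.range ⇑φ := by
    apply Set.eq_of_subset_of_subset
    · intro x hx
      rw [SetLike.mem_coe, Subalgebra.mem_center_iff] at hx
      -- each coefficient of x lies in the center of A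
      have hc : ∀ i, e x i ∈ Z := by
        intro i
        rw [Subalgebra.mem_center_iff]
        intro a
        have := ((he_left x a i).symm.trans (by rw [hx, he_right])).symm
        exact this.symm
      -- x is the sum of b i ⊗ (e x i)
      have hx' : x = (e x).sum fun i a => (b i) ⊗ₜ[K] a := by
        conv_lhs => rw [← e.symm_apply_apply x]
        conv_lhs => rw [← Finsupp.sum_single (e x)]
        rw [map_finsuppSum]
        exact Finsupp.sum_congr fun i _ => he_symm_single i _
      have : x ∈ φ.range := by
        rw [hx']
        apply Subalgebra.sum_mem
        intro i _
        exact ⟨(b i) ⊗ₜ[K] (⟨e x i, hc i⟩ : Z), by simp [hφdef]⟩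
      exact this
    · rintro _ ⟨z, rfl⟩
      rw [SetLike.mem_coe]
      induction z using TensorProduct.induction_on with
      | zero => simpa using (Subalgebra.center F (F ⊗[K] A)).zero_mem
      | tmul f z =>
          rw [Subalgebra.mem_center_iff]
          intro y
          have hz : (z : A) ∈ Subalgebra.center K A := z.2
          rw [Subalgebra.mem_center_iff] at hz
          induction y using TensorProduct.induction_on with
          | zero => simp
          | tmul g m =>
              simp only [hφdef, Algebra.TensorProduct.map_tmul, AlgHom.coe_id, id_eq,
                Subalgebra.coe_val, Algebra.TensorProduct.tmul_mul_tmul]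
              rw [mul_comm g f, hz]
          | add y₁ y₂ h₁ h₂ => rw [add_mul, mul_add, h₁, h₂]
      | add z₁ z₂ h₁ h₂ =>
          rw [map_add]
          exact (Subalgebra.center F (F ⊗[K] A)).add_mem h₁ h₂
  refine ⟨hset, ?_⟩
  -- injectivity of ψ
  have hinj : Function.Injective ψ := by
    have h1 : Function.Injective (LinearMap.lTensor F (Subalgebra.toSubmodule Z).subtype) :=
      Module.Flat.lTensor_preserves_injective_linearMap _ Subtype.val_injective
    have : ∀ x, ψ x = LinearMap.lTensor F (Subalgebra.toSubmodule Z).subtype x := by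
      intro x
      induction x using TensorProduct.induction_on with
      | zero => simp
      | tmul f z => simp [hψdef]
      | add x y hx hy => simp [map_add, hx, hy]
    intro x y hxy
    exact h1 (by rw [← this, ← this, hxy])
  -- the range of ψ as a submodule equals the center
  have hrange : LinearMap.range ψ.toLinearMap
      = Subalgebra.toSubmodule (Subalgebra.center F (F ⊗[K] A)) := by
    ext x
    constructor
    · rintro ⟨z, rfl⟩
      have : ψ z ∈ (Subalgebra.center F (F ⊗[K] A) : Set (F ⊗[K] A)) := by
        rw [hset]; exact ⟨z, (hψφ z).symm⟩
      exact this
    · intro hx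
      have : x ∈ (Subalgebra.center F (F ⊗[K] A) : Set (F ⊗[K] A)) := hx
      rw [hset] at this
      obtain ⟨z, rfl⟩ := this
      exact ⟨z, hψφ z⟩
  have equiv1 : (F ⊗[K] Z) ≃ₗ[F] (Subalgebra.center F (F ⊗[K] A)) :=
    (LinearEquiv.ofInjective ψ.toLinearMap hinj).trans
      (LinearEquiv.ofEq _ _ hrange)
  rw [← equiv1.rank_eq]
  rw [Module.rank_baseChange, Cardinal.lift_id]
end
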